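/- arXiv:math/0602454 — 5 statements merged into one kernel-verified Lean document; each statement's English description precedes it below -/
import Mathlib

section
/- Let G be a group generated by a finite set A. Then the following are equivalent: (i) G has decidable rational subset problem; (ii) the word problem W_A(G) of G with respect to A is an RID language; (iii) there is a single algorithm which, given a word u ∈ A* (representing an element g of G) and a finite automaton over A, decides whether the language recognized by the automaton has non-empty intersection with W_A(G,g). -/
/-!
Common definitions: finite automata over a free monoid and over a product of free
monoids (transducers), RID languages, canonical surjections from free monoids
(finite generating sets), the rational subset problem, and monadic rewriting systems.
-/

namespace RSP

/-- A finite (nondeterministic) automaton over alphabet `α`, with states indexed by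
natural numbers, given by a finite list of labelled edges, an initial vertex and a
list of terminal vertices. -/
structure NA (α : Type) where
  trans : List (ℕ × α × ℕ)
  start : ℕ
  accept : List ℕ

namespace NA

variable {α : Type}

/-- `P.Reach p w q` : the word `w` labels a path from `p` to `q` in `P`. -/
inductive Reach (P : NA α) : ℕ → List α → ℕ → Prop
  | refl (p : ℕ) : Reach P p [] p
  | step {p : ℕ} {a : α} {q : ℕ} {w : List α} {r : ℕ} :
      (p, a, q) ∈ P.trans → Reach P q w r → Reach P p (a :: w) r

/-- The language recognised by a finite automaton: all words labelling a path from
the initial vertex to some terminal vertex.  (The regular languages over `α` are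
exactly the languages of this form.) -/
def lang (P : NA α) : Set (List α) :=
  {w | ∃ q ∈ P.accept, P.Reach P.start w q}

/-- Automata are plain finite data, hence effectively encodable. -/
def equivRepr (α : Type) : NA α ≃ List (ℕ × α × ℕ) × ℕ × List ℕ where
  toFun P := (P.trans, P.start, P.accept)
  invFun x := ⟨x.1, x.2.1, x.2.2⟩
  left_inv := fun ⟨_, _, _⟩ => rfl
  right_inv := fun ⟨_, _, _⟩ => rfl

instance [Primcodable α] : Primcodable (NA α) :=
  Primcodable.ofEquiv _ (equivRepr α)

end NA

/-- A language `L ⊆ α*` is RID (regular intersection decidable) if there is an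
algorithm which, given a finite automaton over `α`, decides whether the regular
language it recognises has non-empty intersection with `L`. -/
def RID {α : Type} [Primcodable α] (L : Set (List α)) : Prop :=
  ∃ f : NA α → Bool, Computable f ∧ ∀ P : NA α, (f P = true ↔ (P.lang ∩ L).Nonempty)

/-- `π : A* → M` is a canonical surjection extending a generating set of `M`:
a surjective monoid homomorphism from the free monoid `List A` onto `M`. -/
structure IsWordMap {A M : Type} [Monoid M] (π : List A → M) : Prop where
  map_nil : π [] = 1
  map_append : ∀ u v : List A, π (u ++ v) = π u * π v
  surjective : Function.Surjective π

/-- The monoid `M` has decidable rational subset problem with respect to the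
canonical surjection `π : A* → M`: there is an algorithm which, given a finite
automaton `P` over `A` and a word `w ∈ A*`, decides whether `π w` belongs to the
rational subset `π(L(P))` of `M`. -/
def IsRatSubsetDecidable {A M : Type} [Monoid M] [Primcodable A] (π : List A → M) : Prop :=
  ∃ f : NA A × List A → Bool, Computable f ∧
    ∀ (P : NA A) (w : List A), (f (P, w) = true ↔ π w ∈ π '' P.lang)

/-- A finitely generated monoid `M` has decidable rational subset problem: for some
(equivalently, by change of generators, any) canonical surjection `π : A* → M` from
a free monoid on a finite alphabet, membership in rational subsets of `M` is
decidable.  Finite alphabets are taken to be `Fin n` without loss of generality. -/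
def HasDecRSP (M : Type) [Monoid M] : Prop :=
  ∃ (n : ℕ) (π : List (Fin n) → M), IsWordMap π ∧ IsRatSubsetDecidable π

/-- A finite automaton over a product of free monoids `A* × B*`: edges are labelled
by pairs of words. -/
structure NA2 (α β : Type) where
  trans : List (ℕ × (List α × List β) × ℕ)
  start : ℕ
  accept : List ℕ

namespace NA2

variable {α β : Type}

/-- `T.Reach p u v q` : some path from `p` to `q` has concatenated label `(u, v)`. -/
inductive Reach (T : NA2 α β) : ℕ → List α → List β → ℕ → Prop
  | refl (p : ℕ) : Reach T p [] [] p
  | step {p : ℕ} {u : List α} {v : List β} {q : ℕ} {u' : List α} {v' : List β} {r : ℕ} :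
      (p, (u, v), q) ∈ T.trans → Reach T q u' v' r → Reach T p (u ++ u') (v ++ v') r

/-- The rational subset of `A* × B*` recognised by the automaton. -/
def rel (T : NA2 α β) : Set (List α × List β) :=
  {x | ∃ q ∈ T.accept, T.Reach T.start x.1 x.2 q}

def equivRepr (α β : Type) : NA2 α β ≃ List (ℕ × (List α × List β) × ℕ) × ℕ × List ℕ where
  toFun T := (T.trans, T.start, T.accept)
  invFun x := ⟨x.1, x.2.1, x.2.2⟩
  left_inv := fun ⟨_, _, _⟩ => rfl
  right_inv := fun ⟨_, _, _⟩ => rfl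

instance [Primcodable α] [Primcodable β] : Primcodable (NA2 α β) :=
  Primcodable.ofEquiv _ (equivRepr α β)

end NA2

/-- A rational transduction `σ ⊆ A* × B*` is a rational subset of the product
monoid `A* × B*`: the set recognised by some finite automaton whose edges are
labelled by pairs of words. -/
def IsRatTransduction {α β : Type} (σ : Set (List α × List β)) : Prop :=
  ∃ T : NA2 α β, σ = T.rel

/-- A set of rewriting rules `Γ ⊆ Σ* × Σ*` is monadic if every right-hand side is
a single letter or the empty word. -/
def IsMonadic {α : Type} (Γ : Set (List α × List α)) : Prop :=
  ∀ p ∈ Γ, p.2.length ≤ 1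

/-- One rewriting step: `u ⇒ v` iff `u = rws` and `v = rxs` for some rule
`(w → x) ∈ Γ`. -/
def Step {α : Type} (Γ : Set (List α × List α)) (u v : List α) : Prop :=
  ∃ (r s w x : List α), (w, x) ∈ Γ ∧ u = r ++ w ++ s ∧ v = r ++ x ++ s

/-- The set `LΓ` of descendants of `L` under `Γ` (under `⇒*`). -/
def descendants {α : Type} (Γ : Set (List α × List α)) (L : Set (List α)) : Set (List α) :=
  {v | ∃ u ∈ L, Relation.ReflTransGen (Step Γ) u v}

/-- The set `LΓ⁻¹` of ancestors of `L` under `Γ` (under `⇒*`). -/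
def ancestors {α : Type} (Γ : Set (List α × List α)) (L : Set (List α)) : Set (List α) :=
  {u | ∃ v ∈ L, Relation.ReflTransGen (Step Γ) u v}

/-- `Γ_x` : the set of left-hand sides of rules of `Γ` with right-hand side `x`. -/
def ruleSet {α : Type} (Γ : Set (List α × List α)) (x : List α) : Set (List α) :=
  {w | (w, x) ∈ Γ}

/-- `Γ` is an RID monadic rewriting system: it is monadic and each language `Γ_x`
(for `x ∈ Σ ∪ {ε}`, i.e. `x` a word of length at most one) is RID. -/
def IsRIDSystem {α : Type} [Primcodable α] (Γ : Set (List α × List α)) : Prop :=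
  IsMonadic Γ ∧ ∀ x : List α, x.length ≤ 1 → RID (ruleSet Γ x)

end RSP

namespace RSP

section Aux

-- auxiliary

variable {α : Type}

def prepOne (a : α) (P : NA α) : NA α :=
  ⟨(0, a, P.start + 1) :: P.trans.map (fun e => (e.1 + 1, e.2.1, e.2.2 + 1)), 0,
    P.accept.map (· + 1)⟩

theorem reach_shift {a : α} {P : NA α} {p w q : _} (h : P.Reach p w q) :
    (prepOne a P).Reach (p + 1) w (q + 1) := by
  induction h with
  | refl => exact .refl _
  | step he _ ih =>
      exact .step (List.mem_cons_of_mem _ (List.mem_map_of_mem he)) ih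

theorem reach_unshift {a : α} {P : NA α} {s w t : _} (h : (prepOne a P).Reach s w t) :
    ∀ p, s = p + 1 → ∃ q, t = q + 1 ∧ P.Reach p w q := by
  induction h with
  | refl p' => exact fun p hp => ⟨p, hp, .refl _⟩
  | step he _ ih =>
      rintro p rfl
      rcases List.mem_cons.1 he with h0 | hm
      · simp at h0
      · obtain ⟨e, hem, heq⟩ := List.mem_map.1 hm
        simp only [Prod.ext_iff] at heq
        obtain ⟨h1, h2, h3⟩ := heq
        obtain rfl : e.1 = p := by omega
        subst h2 h3
        obtain ⟨q0, rfl, hr0⟩ := ih e.2.2 rfl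
        exact ⟨q0, rfl, .step (by exact hem) hr0⟩

theorem lang_prepOne {a : α} {P : NA α} :
    (prepOne a P).lang = {w | ∃ v ∈ P.lang, w = a :: v} := by
  ext w
  constructor
  · rintro ⟨t, ht, hr⟩
    obtain ⟨q, hq, rfl⟩ := List.mem_map.1 ht
    cases hr with
    | step he hr' =>
        rcases List.mem_cons.1 he with h0 | hm
        · simp only [Prod.ext_iff] at h0
          obtain ⟨-, rfl, rfl⟩ := h0
          obtain ⟨q', hq', hr''⟩ := reach_unshift hr' P.start rfl
          obtain rfl : q' = q := by omega
          exact ⟨_, ⟨q', hq, hr''⟩, rfl⟩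
        · obtain ⟨e, -, heq⟩ := List.mem_map.1 hm
          simp [prepOne, Prod.ext_iff] at heq
  · rintro ⟨v, ⟨q, hq, hr⟩, rfl⟩
    exact ⟨q + 1, List.mem_map_of_mem hq,
      .step List.mem_cons_self (reach_shift hr)⟩

def prepend (x : List α) (P : NA α) : NA α := x.foldr prepOne P

theorem lang_prepend {x : List α} {P : NA α} :
    (prepend x P).lang = {w | ∃ v ∈ P.lang, w = x ++ v} := by
  induction x with
  | nil => ext w; simp [prepend]
  | cons a x ih =>
      show (prepOne a (prepend x P)).lang = _
      rw [lang_prepOne]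
      ext w
      simp only [Set.mem_setOf_eq, ih, List.cons_append]
      constructor
      · rintro ⟨v, ⟨v', hv', rfl⟩, rfl⟩; exact ⟨v', hv', rfl⟩
      · rintro ⟨v, hv, rfl⟩; exact ⟨x ++ v, ⟨v, hv, rfl⟩, rfl⟩

section Primrec

variable [Primcodable α]

theorem primrec_prepOne : Primrec (fun p : α × NA α => prepOne p.1 p.2) := by
  have hE : Primrec (fun p : α × NA α => NA.equivRepr α p.2) :=
    (Primrec.of_equiv (e := NA.equivRepr α)).comp Primrec.snd
  have htrans : Primrec (fun p : α × NA α => (NA.equivRepr α p.2).1) :=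
    Primrec.fst.comp hE
  have hstart : Primrec (fun p : α × NA α => (NA.equivRepr α p.2).2.1) :=
    Primrec.fst.comp (Primrec.snd.comp hE)
  have haccept : Primrec (fun p : α × NA α => (NA.equivRepr α p.2).2.2) :=
    Primrec.snd.comp (Primrec.snd.comp hE)
  have hedge0 : Primrec (fun p : α × NA α => ((0 : ℕ), p.1, (NA.equivRepr α p.2).2.1 + 1)) :=
    (Primrec.const 0).pair (Primrec.fst.pair (Primrec.succ.comp hstart))
  have hg : Primrec₂ (fun (_ : α × NA α) (e : ℕ × α × ℕ) => (e.1 + 1, e.2.1, e.2.2 + 1)) :=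
    (Primrec.succ.comp (Primrec.fst.comp Primrec.snd)).pair
      ((Primrec.fst.comp (Primrec.snd.comp Primrec.snd)).pair
        (Primrec.succ.comp (Primrec.snd.comp (Primrec.snd.comp Primrec.snd))))
  have hmap : Primrec (fun p : α × NA α =>
      (NA.equivRepr α p.2).1.map (fun e => (e.1 + 1, e.2.1, e.2.2 + 1))) :=
    Primrec.list_map htrans hg
  have haccmap : Primrec (fun p : α × NA α => (NA.equivRepr α p.2).2.2.map (· + 1)) :=
    Primrec.list_map haccept (Primrec.succ.comp Primrec.snd).to₂
  have key : Primrec (fun p : α × NA α => NA.equivRepr α (prepOne p.1 p.2)) :=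
    ((Primrec.list_cons.comp hedge0 hmap).pair
      ((Primrec.const 0).pair haccmap)).of_eq fun p => rfl
  exact (Primrec.of_equiv_iff (NA.equivRepr α)).1 key

theorem primrec_prepend : Primrec (fun p : List α × NA α => prepend p.1 p.2) := by
  have := Primrec.list_foldr (f := fun p : List α × NA α => p.1)
    (g := fun p : List α × NA α => p.2) (h := fun _ e => prepOne e.1 e.2)
    Primrec.fst Primrec.snd (primrec_prepOne.comp Primrec.snd).to₂
  exact this.of_eq fun p => rfl

end Primrec

def invWord {A : Type} (ι : A → List A) (u : List A) : List A :=
  ((u.map ι).reverse).flatten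

theorem primrec_invWord {A : Type} [Primcodable A] [Finite A] (ι : A → List A) :
    Primrec (invWord ι) :=
  Primrec.list_flatten.comp (Primrec.list_reverse.comp
    (Primrec.list_map Primrec.id (((Primrec.dom_finite ι).comp Primrec.snd).to₂)))

theorem pi_invWord {A G : Type} [Group G] {π : List A → G} (hπ : IsWordMap π)
    {ι : A → List A} (hι : ∀ a, π (ι a) = (π [a])⁻¹) :
    ∀ u, π (invWord ι u) = (π u)⁻¹ := by
  intro u
  induction u with
  | nil => simp [invWord, hπ.map_nil]
  | cons a u ih =>
      have h1 : invWord ι (a :: u) = invWord ι u ++ ι a := by simp [invWord]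
      have h2 : π (a :: u) = π [a] * π u := by
        simpa using hπ.map_append [a] u
      rw [h1, hπ.map_append, ih, hι, h2, mul_inv_rev]

end Aux

/-- Let `G` be a group generated by a finite set `A` (via the
canonical surjection `π : A* → G`).  The following are equivalent:
(i) `G` has decidable rational subset problem;
(ii) the word problem `W_A(G) = π⁻¹(1)` is RID;
(iii) there is a single algorithm which, given a word `u ∈ A*` and a finite
automaton over `A`, decides whether the recognised language meets `W_A(G, π u)`. -/
theorem rationalSubset_tfae {A G : Type} [Group G] [Fintype A] [Primcodable A]
    (π : List A → G) (hπ : IsWordMap π) :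
    List.TFAE [
      IsRatSubsetDecidable π,
      RID {w : List A | π w = 1},
      ∃ f : List A × NA A → Bool, Computable f ∧
        ∀ (u : List A) (P : NA A),
          (f (u, P) = true ↔ (P.lang ∩ {w : List A | π w = π u}).Nonempty)] := by
  tfae_have 1 → 3 := by
    rintro ⟨f, hf, h⟩
    refine ⟨fun p => f (p.2, p.1), hf.comp (Computable.snd.pair Computable.fst), fun u P => ?_⟩
    rw [h]
    simp only [Set.mem_image, Set.Nonempty, Set.mem_inter_iff, Set.mem_setOf_eq]
  tfae_have 3 → 1 := by
    rintro ⟨f, hf, h⟩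
    refine ⟨fun p => f (p.2, p.1), hf.comp (Computable.snd.pair Computable.fst), fun P w => ?_⟩
    rw [h]
    simp only [Set.mem_image, Set.Nonempty, Set.mem_inter_iff, Set.mem_setOf_eq]
  tfae_have 3 → 2 := by
    rintro ⟨f, hf, h⟩
    refine ⟨fun P => f ([], P), hf.comp ((Computable.const []).pair Computable.id),
      fun P => ?_⟩
    rw [h]
    simp only [hπ.map_nil]
  tfae_have 2 → 3 := by
    rintro ⟨f, hf, h⟩
    choose ι hι using fun a : A => hπ.surjective (π [a])⁻¹
    have hflat := pi_invWord hπ hι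
    refine ⟨fun p => f (prepend (invWord ι p.1) p.2), ?_, fun u P => ?_⟩
    · exact hf.comp (primrec_prepend.comp
        (((primrec_invWord ι).comp Primrec.fst).pair Primrec.snd)).to_comp
    · rw [h]
      constructor
      · rintro ⟨w, hw, hw1⟩
        rw [lang_prepend] at hw
        obtain ⟨v, hv, rfl⟩ := hw
        refine ⟨v, hv, ?_⟩
        have hw1' : π (invWord ι u ++ v) = 1 := hw1
        rw [hπ.map_append, hflat u] at hw1'
        exact (inv_mul_eq_one.1 hw1').symm
      · rintro ⟨v, hv, hveq⟩
        have hveq' : π v = π u := hveq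
        refine ⟨invWord ι u ++ v, ?_, ?_⟩
        · rw [lang_prepend]; exact ⟨v, hv, rfl⟩
        · show π (invWord ι u ++ v) = 1
          rw [hπ.map_append, hflat u, hveq', inv_mul_cancel]
  tfae_finish

end RSP
end

section
/- Let G be a finitely generated group and H a subgroup of finite index in G. Let X be a finite monoid generating set for G and Y a finite monoid generating set for H. Then there is a rational transduction σ ⊆ Y* × X* such that W_X(G) = W_Y(H)σ, i.e., the word problem of G with respect to X is the image of the word problem of H with respect to Y under σ. -/
/-!
Let `G` act on the finite set `G ⧸ H` of left cosets and fix the transversal `c ↦ c.out`. The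
Schreier elements `c.out⁻¹ * g * (g⁻¹ • c).out` lie in `H` and form a cocycle, so the sequential
transducer whose states are the cosets, and which on reading `x` in state `c` moves to `x⁻¹ • c`
and writes a word over `Y` for the Schreier element of `(c, πX [x])`, turns `v ∈ X*` into a word
representing `c.out⁻¹ * πX v * ((πX v)⁻¹ • c).out`. Starting and ending at the coset `H` accepts
exactly the `v` with `πX v ∈ H`, and for those the output represents a conjugate of `πX v`: it lies
in `W_Y(H)` exactly when `v ∈ W_X(G)`.
-/

namespace RSP

namespace NA2

variable {Q α β : Type}

def outWord (δ : Q → β → Q) (out : Q → β → List α) : Q → List β → List α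
  | _, [] => []
  | q, x :: v => out q x ++ outWord δ out (δ q x) v

variable [Fintype Q] [Encodable Q] [Fintype β]

open Encodable

noncomputable def sequential (δ : Q → β → Q) (out : Q → β → List α) (q₀ q₁ : Q) : NA2 α β where
  trans := (Finset.univ : Finset (Q × β)).toList.map fun p =>
    (encode p.1, (out p.1 p.2, [p.2]), encode (δ p.1 p.2))
  start := encode q₀
  accept := [encode q₁]

variable {δ : Q → β → Q} {out : Q → β → List α} {q₀ q₁ : Q}

theorem mem_sequential_trans {n m : ℕ} {l : List α × List β} :
    (n, l, m) ∈ (sequential δ out q₀ q₁).trans ↔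
      ∃ q x, encode q = n ∧ (out q x, [x]) = l ∧ encode (δ q x) = m := by
  simp [sequential]

theorem reach_sequential_iff {q : Q} {u : List α} {v : List β} {n : ℕ} :
    (sequential δ out q₀ q₁).Reach (encode q) u v n ↔
      n = encode (v.foldl δ q) ∧ u = outWord δ out q v := by
  constructor
  · intro h
    generalize hq : encode q = p at h
    induction h generalizing q with
    | refl => exact ⟨hq.symm, rfl⟩
    | step hmem _ ih =>
      obtain ⟨q', x, rfl, hl, rfl⟩ := mem_sequential_trans.mp hmem
      obtain rfl := encode_injective hq.symm
      obtain ⟨rfl, rfl⟩ := Prod.ext_iff.mp hl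
      obtain ⟨rfl, rfl⟩ := ih rfl
      exact ⟨rfl, rfl⟩
  · rintro ⟨rfl, rfl⟩
    induction v generalizing q with
    | nil => exact .refl _
    | cons x v ih => exact .step (mem_sequential_trans.mpr ⟨q, x, rfl, rfl, rfl⟩) ih

theorem mem_sequential_rel {u : List α} {v : List β} :
    (u, v) ∈ (sequential δ out q₀ q₁).rel ↔ v.foldl δ q₀ = q₁ ∧ u = outWord δ out q₀ v := by
  show (∃ n ∈ [encode q₁], (sequential δ out q₀ q₁).Reach (encode q₀) u v n) ↔ _
  simp [reach_sequential_iff, encode_injective.eq_iff, eq_comm]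

end NA2

namespace IsWordMap

variable {A M : Type} [Monoid M] {π : List A → M}

theorem map_cons (hπ : IsWordMap π) (a : A) (w : List A) : π (a :: w) = π [a] * π w :=
  hπ.map_append [a] w

theorem foldl_inv_smul {G S : Type} [Group G] [MulAction G S] {π : List A → G}
    (hπ : IsWordMap π) (w : List A) (s : S) :
    w.foldl (fun s a => (π [a])⁻¹ • s) s = (π w)⁻¹ • s := by
  induction w generalizing s with
  | nil => simp [hπ.map_nil]
  | cons a w ih => rw [List.foldl_cons, ih, hπ.map_cons a w, mul_inv_rev, mul_smul]

end IsWordMap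

section Schreier

variable {G : Type} [Group G] {H : Subgroup G}

noncomputable def schreier (c : G ⧸ H) (g : G) : G := c.out⁻¹ * g * (g⁻¹ • c).out

theorem schreier_mem (c : G ⧸ H) (g : G) : schreier c g ∈ H := by
  have h : QuotientGroup.mk (g⁻¹ * c.out) = (QuotientGroup.mk (g⁻¹ • c).out : G ⧸ H) := by
    rw [QuotientGroup.out_eq']; exact MulAction.Quotient.mk_smul_out H g⁻¹ c
  simpa [schreier, mul_assoc] using QuotientGroup.eq.mp h

theorem schreier_mul (c : G ⧸ H) (g g' : G) :
    schreier c (g * g') = schreier c g * schreier (g⁻¹ • c) g' := by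
  simp only [schreier, mul_inv_rev, mul_smul]
  group

theorem eq_one_iff_smul_eq_and_schreier_eq_one (c : G ⧸ H) (g : G) :
    g = 1 ↔ g⁻¹ • c = c ∧ schreier c g = 1 := by
  constructor
  · rintro rfl
    simp [schreier]
  · rintro ⟨hc, h⟩
    rw [schreier, hc, mul_assoc, inv_mul_eq_one] at h
    exact mul_eq_right.mp h.symm

end Schreier

theorem wordProblem_transduction_of_finiteIndex_general {G : Type} [Group G] (H : Subgroup G)
    [H.FiniteIndex] {X Y : Type} [Fintype X]
    (πX : List X → G) (hX : IsWordMap πX) (πY : List Y → H) (hY : IsWordMap πY) :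
    ∃ T : NA2 Y X,
      {v : List X | πX v = 1} = {v : List X | ∃ u : List Y, πY u = 1 ∧ (u, v) ∈ T.rel} := by
  classical
  have : Fintype (G ⧸ H) := Fintype.ofFinite _
  have : Encodable (G ⧸ H) := Fintype.toEncodable _
  let δ : G ⧸ H → X → G ⧸ H := fun c x => (πX [x])⁻¹ • c
  choose out hout using fun (c : G ⧸ H) (x : X) =>
    (hY.surjective ⟨schreier c (πX [x]), schreier_mem c (πX [x])⟩).imp
      fun _ h => congrArg Subtype.val h
  have hrun (c : G ⧸ H) (v : List X) : (πY (NA2.outWord δ out c v) : G) = schreier c (πX v) := by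
    induction v generalizing c with
    | nil => simp [NA2.outWord, hY.map_nil, hX.map_nil, schreier]
    | cons x v ih =>
      rw [NA2.outWord, hY.map_append, Subgroup.coe_mul, hout, ih, hX.map_cons x v, schreier_mul]
  let c₁ : G ⧸ H := QuotientGroup.mk 1
  refine ⟨NA2.sequential δ out c₁ c₁, Set.ext fun v => ?_⟩
  have hδ : v.foldl δ c₁ = (πX v)⁻¹ • c₁ := hX.foldl_inv_smul v c₁
  simp only [Set.mem_ofPred_eq, NA2.mem_sequential_rel, hδ]
  rw [eq_one_iff_smul_eq_and_schreier_eq_one c₁, ← hrun]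
  constructor
  · rintro ⟨hc, hu⟩
    exact ⟨_, Subtype.ext hu, hc, rfl⟩
  · rintro ⟨u, hu, hc, rfl⟩
    exact ⟨hc, congrArg Subtype.val hu⟩

/-- Let `G` be a finitely generated group and `H` a subgroup of
finite index, with finite monoid generating sets `X` of `G` and `Y` of `H` (via
canonical surjections `πX : X* → G` and `πY : Y* → H`).  Then there is a rational
transduction `σ ⊆ Y* × X*` with `W_X(G) = W_Y(H)σ`. -/
theorem wordProblem_transduction_of_finiteIndex {G : Type} [Group G] (H : Subgroup G)
    [H.FiniteIndex] {X Y : Type} [Fintype X] [Fintype Y]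
    (πX : List X → G) (hX : IsWordMap πX) (πY : List Y → H) (hY : IsWordMap πY) :
    ∃ T : NA2 Y X,
      {v : List X | πX v = 1} = {v : List X | ∃ u : List Y, πY u = 1 ∧ (u, v) ∈ T.rel} :=
  wordProblem_transduction_of_finiteIndex_general H πX hX πY hY

end RSP
end

section
/- Let G and H be finitely generated groups such that H is a subgroup of finite index in G, and suppose H has decidable rational subset problem. Then G has decidable rational subset problem. -/
namespace RSP


theorem NA.Reach.append {α : Type} {P : NA α} {p u q v r} (h1 : P.Reach p u q)
    (h2 : P.Reach q v r) : P.Reach p (u ++ v) r := by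
  induction h1 with
  | refl => simpa
  | step he _ ih => exact Reach.step he (ih h2)

theorem NA.Reach.nil_eq {α : Type} {P : NA α} {p q} (h : P.Reach p [] q) : p = q := by
  cases h; rfl

/-! ### Boolean membership helpers -/


def memB (x : ℕ) (l : List ℕ) : Bool :=
  l.foldr (fun y b => (decide (x = y)) || b) false

theorem memB_iff {x : ℕ} {l : List ℕ} : memB x l = true ↔ x ∈ l := by
  induction l with
  | nil => simp [memB]
  | cons y l ih =>
    show (decide (x = y) || memB x l) = true ↔ _
    simp [ih]

def anyMemB (l₁ l₂ : List ℕ) : Bool :=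
  l₁.foldr (fun x b => memB x l₂ || b) false

theorem anyMemB_iff {l₁ l₂ : List ℕ} : anyMemB l₁ l₂ = true ↔ ∃ x ∈ l₁, x ∈ l₂ := by
  induction l₁ with
  | nil => simp [anyMemB]
  | cons y l ih =>
    show (memB y l₂ || anyMemB l l₂) = true ↔ _
    simp [ih, memB_iff]

/-! ### Reachability in a finite graph -/

def eStep (E : List (ℕ × ℕ)) (S : List ℕ) : List ℕ :=
  S ++ E.filterMap fun e => cond (memB e.1 S) (some e.2) none

def reachIter (E : List (ℕ × ℕ)) (s : ℕ) : ℕ → List ℕ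
  | 0 => [s]
  | k + 1 => eStep E (reachIter E s k)

def reachSet (E : List (ℕ × ℕ)) (s : ℕ) : List ℕ :=
  reachIter E s (E.length + 2)

def ERel (E : List (ℕ × ℕ)) (x y : ℕ) : Prop := (x, y) ∈ E

theorem eStep_subset {E S} : S ⊆ eStep E S := List.subset_append_left _ _

theorem eStep_mono {E S T} (h : S ⊆ T) : eStep E S ⊆ eStep E T := by
  intro x hx
  rcases List.mem_append.1 hx with hx | hx
  · exact List.mem_append_left _ (h hx)
  · refine List.mem_append_right _ ?_
    rcases List.mem_filterMap.1 hx with ⟨e, he, hcond⟩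
    refine List.mem_filterMap.2 ⟨e, he, ?_⟩
    rcases hm : memB e.1 S with _ | _
    · simp [hm] at hcond
    · have : memB e.1 T = true := memB_iff.2 (h (memB_iff.1 hm))
      simp [this]; simpa [hm] using hcond

theorem reachIter_mono {E s} : ∀ {j k}, j ≤ k → reachIter E s j ⊆ reachIter E s k := by
  intro j k h
  induction h with
  | refl => exact fun _ h => h
  | step _ ih => exact fun x hx => eStep_subset (ih hx)

theorem eStep_sound {E S s} (h : ∀ x ∈ S, Relation.ReflTransGen (ERel E) s x) :
    ∀ x ∈ eStep E S, Relation.ReflTransGen (ERel E) s x := by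
  intro x hx
  rcases List.mem_append.1 hx with hx | hx
  · exact h x hx
  · rcases List.mem_filterMap.1 hx with ⟨e, he, hcond⟩
    rcases hm : memB e.1 S with _ | _
    · simp [hm] at hcond
    · simp [hm] at hcond
      subst hcond
      exact (h e.1 (memB_iff.1 hm)).tail (by exact he)

theorem reachIter_sound {E s} : ∀ k, ∀ x ∈ reachIter E s k,
    Relation.ReflTransGen (ERel E) s x := by
  intro k
  induction k with
  | zero => intro x hx; simp [reachIter] at hx; subst hx; exact .refl
  | succ k ih => exact eStep_sound ih

/-- `S` is closed under the edges. -/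
def Closed (E : List (ℕ × ℕ)) (S : List ℕ) : Prop := ∀ e ∈ E, e.1 ∈ S → e.2 ∈ S

theorem eStep_of_closed {E S} (h : Closed E S) : eStep E S ⊆ S := by
  intro x hx
  rcases List.mem_append.1 hx with hx | hx
  · exact hx
  · rcases List.mem_filterMap.1 hx with ⟨e, he, hcond⟩
    rcases hm : memB e.1 S with _ | _
    · simp [hm] at hcond
    · simp [hm] at hcond; subst hcond; exact h e he (memB_iff.1 hm)

theorem reach_mem_of_closed {E S s} (h : Closed E S) (hs : s ∈ S) :
    ∀ {x}, Relation.ReflTransGen (ERel E) s x → x ∈ S := by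
  intro x hx
  induction hx with
  | refl => exact hs
  | tail _ he ih => exact h _ he ih

theorem reachIter_subset_univ {E s} : ∀ k, reachIter E s k ⊆ s :: E.map Prod.snd := by
  intro k
  induction k with
  | zero =>
    intro x hx
    simp [reachIter] at hx
    simp [hx]
  | succ k ih =>
    intro x hx
    rcases List.mem_append.1 hx with hx | hx
    · exact ih hx
    · rcases List.mem_filterMap.1 hx with ⟨e, he, hcond⟩
      rcases hm : memB e.1 (reachIter E s k) with _ | _
      · simp [hm] at hcond
      · simp [hm] at hcond; subst hcond
        exact List.mem_cons_of_mem _ (List.mem_map.2 ⟨e, he, rfl⟩)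

theorem card_grow {E s} : ∀ k, (∀ j < k, ¬ Closed E (reachIter E s j)) →
    k + 1 ≤ (reachIter E s k).toFinset.card := by
  intro k
  induction k with
  | zero => intro _; simp [reachIter]
  | succ k ih =>
    intro h
    have hk : k + 1 ≤ (reachIter E s k).toFinset.card :=
      ih fun j hj => h j (Nat.lt_succ_of_lt hj)
    have hnc : ¬ Closed E (reachIter E s k) := h k (Nat.lt_succ_self k)
    simp only [Closed, not_forall] at hnc
    rcases hnc with ⟨e, he, h1, h2⟩
    have hnew : e.2 ∈ reachIter E s (k + 1) := by
      refine List.mem_append_right _ (List.mem_filterMap.2 ⟨e, he, ?_⟩)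
      simp [memB_iff.2 h1]
    have hsub : (reachIter E s k).toFinset ⊂ (reachIter E s (k+1)).toFinset := by
      refine Finset.ssubset_iff_of_subset ?_ |>.2 ⟨e.2, by simpa using hnew, by simpa using h2⟩
      intro x hx
      simp only [List.mem_toFinset] at *
      exact reachIter_mono (Nat.le_succ k) hx
    calc k + 2 ≤ (reachIter E s k).toFinset.card + 1 := by omega
    _ ≤ (reachIter E s (k+1)).toFinset.card := Finset.card_lt_card hsub

theorem exists_closed_iter {E : List (ℕ × ℕ)} {s : ℕ} :
    ∃ j ≤ E.length + 1, Closed E (reachIter E s j) := by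
  by_contra h
  push_neg at h
  have h' : ∀ j < E.length + 2, ¬ Closed E (reachIter E s j) := by
    intro j hj
    exact h j (by omega)
  have hc := card_grow (E := E) (s := s) (E.length + 2) h'
  have hb : (reachIter E s (E.length + 2)).toFinset.card ≤ E.length + 1 := by
    have h1 : (reachIter E s (E.length + 2)).toFinset ⊆ (s :: E.map Prod.snd).toFinset := by
      intro x hx
      simp only [List.mem_toFinset] at *
      exact reachIter_subset_univ _ hx
    calc (reachIter E s (E.length + 2)).toFinset.card
        ≤ (s :: E.map Prod.snd).toFinset.card := Finset.card_le_card h1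
      _ ≤ (s :: E.map Prod.snd).length := List.toFinset_card_le _
      _ = E.length + 1 := by simp
  omega

theorem mem_reachSet_iff {E : List (ℕ × ℕ)} {s x : ℕ} :
    x ∈ reachSet E s ↔ Relation.ReflTransGen (ERel E) s x := by
  constructor
  · exact reachIter_sound _ x
  · intro h
    rcases exists_closed_iter (E := E) (s := s) with ⟨j, hj, hcl⟩
    have hs : s ∈ reachIter E s j := reachIter_mono (Nat.zero_le j) (by simp [reachIter])
    have hx : x ∈ reachIter E s j := reach_mem_of_closed hcl hs h
    exact reachIter_mono (by omega) hx

/-! ### Schreier data for a finite-index subgroup -/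

theorem exists_schreier {G : Type} [Group G] (H : Subgroup G) [H.FiniteIndex]
    {B : Type} (πH : List B → H) (hH : IsWordMap πH)
    {A : Type} (πG : List A → G) :
    ∃ (m : ℕ) (ρ : Fin m → G) (c₁ : Fin m) (st : Fin m → A → Fin m)
      (β : Fin m → A → List B),
      ρ c₁ = 1 ∧
      (∀ c a, (πH (β c a) : G) * ρ (st c a) = ρ c * πG [a]) ∧
      (∀ c c' : Fin m, ρ c * (ρ c')⁻¹ ∈ H → c = c') := by
  have hfin : Finite (Quotient (QuotientGroup.rightRel H)) :=
    Finite.of_equiv _ (QuotientGroup.quotientRightRelEquivQuotientLeftRel H).symm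
  obtain ⟨m, ⟨e⟩⟩ := Finite.exists_equiv_fin (Quotient (QuotientGroup.rightRel H))
  set c₁ : Fin m := e ⟦(1 : G)⟧ with hc₁
  set ρ : Fin m → G := fun c => if c = c₁ then 1 else (e.symm c).out with hρ
  have hclass : ∀ c : Fin m, (⟦ρ c⟧ : Quotient (QuotientGroup.rightRel H)) = e.symm c := by
    intro c
    by_cases h : c = c₁
    · subst h; simp [hρ, hc₁]
    · simp [hρ, h, Quotient.out_eq]
  set st : Fin m → A → Fin m := fun c a => e ⟦ρ c * πG [a]⟧ with hst
  have hmem : ∀ (c : Fin m) (a : A), ρ c * πG [a] * (ρ (st c a))⁻¹ ∈ H := by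
    intro c a
    have h1 : (⟦ρ (st c a)⟧ : Quotient (QuotientGroup.rightRel H)) = ⟦ρ c * πG [a]⟧ := by
      rw [hclass]; simp [hst]
    have h2 := Quotient.exact h1
    exact QuotientGroup.rightRel_apply.mp h2
  choose β hβ using fun (c : Fin m) (a : A) =>
    hH.surjective ⟨ρ c * πG [a] * (ρ (st c a))⁻¹, hmem c a⟩
  refine ⟨m, ρ, c₁, st, β, by simp [hρ], ?_, ?_⟩
  · intro c a
    have : (πH (β c a) : G) = ρ c * πG [a] * (ρ (st c a))⁻¹ := by rw [hβ]
    rw [this]; group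
  · intro c c' h
    have h2 : (⟦ρ c'⟧ : Quotient (QuotientGroup.rightRel H)) = ⟦ρ c⟧ :=
      Quotient.sound (QuotientGroup.rightRel_apply.mpr h)
    rw [hclass, hclass] at h2
    exact (e.symm.injective h2).symm

/-! ### The product (Schreier) automaton -/

section Prod

variable {A B : Type} {m : ℕ}

def runC (st : Fin m → A → Fin m) : Fin m → List A → Fin m
  | c, [] => c
  | c, a :: u => runC st (st c a) u

def outL (st : Fin m → A → Fin m) (β : Fin m → A → List B) : Fin m → List A → List (List B)
  | _, [] => []
  | c, a :: u => β c a :: outL st β (st c a) u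

theorem runOut_spec {G : Type} [Group G] {H : Subgroup G}
    (πH : List B → H) (hH : IsWordMap πH) (πG : List A → G) (hG : IsWordMap πG)
    (ρ : Fin m → G) (st : Fin m → A → Fin m) (β : Fin m → A → List B)
    (hcomp : ∀ c a, (πH (β c a) : G) * ρ (st c a) = ρ c * πG [a]) :
    ∀ (u : List A) (c : Fin m),
      (πH (outL st β c u).flatten : G) * ρ (runC st c u) = ρ c * πG u := by
  intro u
  induction u with
  | nil => intro c; simp [outL, runC, hH.map_nil, hG.map_nil]
  | cons a u ih =>
    intro c
    have h1 : πG (a :: u) = πG [a] * πG u := by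
      have := hG.map_append [a] u; simpa using this
    have h2 : (πH (β c a ++ (outL st β (st c a) u).flatten) : G)
        = (πH (β c a) : G) * (πH (outL st β (st c a) u).flatten : G) := by
      rw [hH.map_append, Subgroup.coe_mul]
    show (πH ((β c a :: outL st β (st c a) u).flatten) : G) * ρ (runC st (st c a) u) = _
    rw [List.flatten_cons, h2, h1, mul_assoc, ih (st c a), ← mul_assoc, hcomp, mul_assoc]

def prodAut (st : Fin m → A → Fin m) (β : Fin m → A → List B)
    (P : NA A) (c₁ d : Fin m) : NA (List B) where
  trans := P.trans.flatMap fun e => (List.finRange m).map fun c =>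
    (Nat.pair e.1 c.val, β c e.2.1, Nat.pair e.2.2 (st c e.2.1).val)
  start := Nat.pair P.start c₁.val
  accept := P.accept.map fun q => Nat.pair q d.val

theorem prodAut_reach_fwd {st : Fin m → A → Fin m} {β : Fin m → A → List B}
    {P : NA A} {c₁ d : Fin m} {p u q} (h : P.Reach p u q) (c : Fin m) :
    (prodAut st β P c₁ d).Reach (Nat.pair p c.val) (outL st β c u)
      (Nat.pair q (runC st c u).val) := by
  induction h generalizing c with
  | refl => exact NA.Reach.refl _
  | @step p a q' w r he _ ih =>
    refine NA.Reach.step ?_ (ih (st c a))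
    simp only [prodAut, List.mem_flatMap, List.mem_map]
    exact ⟨(p, a, q'), he, c, List.mem_finRange c, rfl⟩

theorem prodAut_reach_bwd {st : Fin m → A → Fin m} {β : Fin m → A → List B}
    {P : NA A} {c₁ d : Fin m} :
    ∀ {x ws y}, (prodAut st β P c₁ d).Reach x ws y →
    ∀ (p : ℕ) (c : Fin m), x = Nat.pair p c.val →
      ∃ u q, P.Reach p u q ∧ ws = outL st β c u ∧ y = Nat.pair q (runC st c u).val := by
  intro x ws y h
  induction h with
  | refl z =>
    intro p c hx
    exact ⟨[], p, NA.Reach.refl p, rfl, hx⟩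
  | @step z l z' ws' r he _ ih =>
    intro p c hx
    subst hx
    simp only [prodAut, List.mem_flatMap, List.mem_map] at he
    obtain ⟨e, heP, c', -, heq⟩ := he
    have h1 : e.1 = p ∧ c'.val = c.val := by
      have := congrArg Prod.fst heq
      simpa [Nat.pair_eq_pair] using this
    have hc' : c' = c := Fin.val_injective h1.2
    subst hc'
    obtain ⟨h1, -⟩ := h1
    subst h1
    have hl : l = β c' e.2.1 := by
      have := congrArg (fun t => t.2.1) heq; simpa using this.symm
    have hz' : z' = Nat.pair e.2.2 (st c' e.2.1).val := by
      have := congrArg (fun t => t.2.2) heq; simpa using this.symm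
    obtain ⟨u, q, hru, hws, hy⟩ := ih e.2.2 (st c' e.2.1) hz'
    refine ⟨e.2.1 :: u, q, ?_, ?_, ?_⟩
    · exact NA.Reach.step (by exact heP) hru
    · simp [outL, hl, hws]
    · simpa [runC] using hy

theorem prodAut_lang_fwd {st : Fin m → A → Fin m} {β : Fin m → A → List B}
    {P : NA A} {c₁ : Fin m} {u} (hu : u ∈ P.lang) :
    outL st β c₁ u ∈ (prodAut st β P c₁ (runC st c₁ u)).lang := by
  obtain ⟨q, hq, hr⟩ := hu
  refine ⟨Nat.pair q (runC st c₁ u).val, ?_, ?_⟩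
  · simp only [prodAut, List.mem_map]; exact ⟨q, hq, rfl⟩
  · exact prodAut_reach_fwd hr c₁

theorem prodAut_lang_bwd {st : Fin m → A → Fin m} {β : Fin m → A → List B}
    {P : NA A} {c₁ d : Fin m} {ws} (hws : ws ∈ (prodAut st β P c₁ d).lang) :
    ∃ u ∈ P.lang, ws = outL st β c₁ u ∧ runC st c₁ u = d := by
  obtain ⟨y, hy, hr⟩ := hws
  simp only [prodAut, List.mem_map] at hy
  obtain ⟨q, hq, rfl⟩ := hy
  obtain ⟨u, q2, hru, hws', hy'⟩ := prodAut_reach_bwd hr P.start c₁ rfl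
  rw [Nat.pair_eq_pair] at hy'
  obtain ⟨h1, h2⟩ := hy'
  rw [h1] at hq
  exact ⟨u, ⟨q2, hq, hru⟩, hws', Fin.val_injective h2.symm⟩

end Prod

/-! ### The main reduction equivalence -/

theorem main_iff {G : Type} [Group G] {H : Subgroup G} {A B : Type} {m : ℕ}
    (πH : List B → H) (hH : IsWordMap πH) (πG : List A → G) (hG : IsWordMap πG)
    (ρ : Fin m → G) (c₁ : Fin m) (st : Fin m → A → Fin m) (β : Fin m → A → List B)
    (hone : ρ c₁ = 1)
    (hcomp : ∀ c a, (πH (β c a) : G) * ρ (st c a) = ρ c * πG [a])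
    (hinj : ∀ c c' : Fin m, ρ c * (ρ c')⁻¹ ∈ H → c = c')
    (P : NA A) (w : List A) :
    πG w ∈ πG '' P.lang ↔
      πH (outL st β c₁ w).flatten ∈
        πH '' (List.flatten '' (prodAut st β P c₁ (runC st c₁ w)).lang) := by
  have spec := runOut_spec πH hH πG hG ρ st β hcomp
  constructor
  · rintro ⟨u, hu, hequ⟩
    have h1 : (πH (outL st β c₁ u).flatten : G) * ρ (runC st c₁ u)
        = (πH (outL st β c₁ w).flatten : G) * ρ (runC st c₁ w) := by
      rw [spec u c₁, spec w c₁, hone, one_mul, one_mul, hequ]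
    have hd : runC st c₁ u = runC st c₁ w := by
      apply hinj
      have : ρ (runC st c₁ u) * (ρ (runC st c₁ w))⁻¹
          = ((πH (outL st β c₁ u).flatten)⁻¹ * πH (outL st β c₁ w).flatten : H) := by
        push_cast
        rw [eq_comm, inv_mul_eq_iff_eq_mul, ← mul_assoc, h1]
        group
      rw [this]; exact SetLike.coe_mem _
    have hπ : πH (outL st β c₁ u).flatten = πH (outL st β c₁ w).flatten := by
      rw [hd] at h1
      have := mul_right_cancel h1
      exact Subtype.coe_injective this
    rw [← hπ]
    exact ⟨(outL st β c₁ u).flatten,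
      ⟨outL st β c₁ u, by rw [← hd]; exact prodAut_lang_fwd hu, rfl⟩, rfl⟩
  · rintro ⟨v, ⟨ws, hws, rfl⟩, heq⟩
    obtain ⟨u, hu, rfl, hd⟩ := prodAut_lang_bwd hws
    refine ⟨u, hu, ?_⟩
    have h1 := spec u c₁
    rw [hone, one_mul, hd] at h1
    have h2 := spec w c₁
    rw [hone, one_mul] at h2
    rw [← h1, ← h2, heq]

/-! ### ε-elimination for word-labelled automata -/

section Elim
variable {B : Type}

def naNodes (Q : NA (List B)) : List ℕ :=
  Q.start :: Q.trans.flatMap fun e => [e.1, e.2.2]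

def epsEdges (Q : NA (List B)) : List (ℕ × ℕ) :=
  Q.trans.filterMap fun e => match e.2.1 with
    | [] => some (e.1, e.2.2)
    | _ :: _ => none

def elimNA (Q : NA (List B)) : NA (List B) where
  trans := Q.trans.flatMap fun e => match e.2.1 with
    | [] => []
    | _ :: _ => (naNodes Q).filterMap fun p =>
        cond (memB e.1 (reachSet (epsEdges Q) p)) (some (p, e.2.1, e.2.2)) none
  start := Q.start
  accept := (naNodes Q).filterMap fun p =>
      cond (anyMemB (reachSet (epsEdges Q) p) Q.accept) (some p) none

/-- ε-reachability relation. -/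
def EpsR (Q : NA (List B)) (p q : ℕ) : Prop :=
  Relation.ReflTransGen (ERel (epsEdges Q)) p q

theorem mem_epsEdges {Q : NA (List B)} {x y : ℕ} :
    (x, y) ∈ epsEdges Q ↔ (x, ([] : List B), y) ∈ Q.trans := by
  constructor
  · rintro h
    rcases List.mem_filterMap.1 h with ⟨⟨a, l, b⟩, he, hm⟩
    cases l with
    | nil => simp at hm; obtain ⟨rfl, rfl⟩ := hm; exact he
    | cons c l => simp at hm
  · intro h
    exact List.mem_filterMap.2 ⟨(x, [], y), h, rfl⟩

theorem start_mem_naNodes {Q : NA (List B)} : Q.start ∈ naNodes Q :=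
  List.mem_cons_self

theorem tgt_mem_naNodes {Q : NA (List B)} {e} (he : e ∈ Q.trans) : e.2.2 ∈ naNodes Q :=
  List.mem_cons_of_mem _ (List.mem_flatMap.2 ⟨e, he, by simp⟩)

theorem mem_elim_trans_intro {Q : NA (List B)} {x p t : ℕ} {l : List B}
    (hQ : (x, l, t) ∈ Q.trans) (hl : l ≠ []) (hp : p ∈ naNodes Q) (hr : EpsR Q p x) :
    (p, l, t) ∈ (elimNA Q).trans := by
  refine List.mem_flatMap.2 ⟨(x, l, t), hQ, ?_⟩
  cases l with
  | nil => exact absurd rfl hl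
  | cons b l =>
    refine List.mem_filterMap.2 ⟨p, hp, ?_⟩
    have : memB x (reachSet (epsEdges Q) p) = true :=
      memB_iff.2 (mem_reachSet_iff.2 hr)
    simp [this]

theorem mem_elim_trans_elim {Q : NA (List B)} {p t : ℕ} {l : List B}
    (h : (p, l, t) ∈ (elimNA Q).trans) :
    ∃ x, (x, l, t) ∈ Q.trans ∧ EpsR Q p x ∧ l ≠ [] ∧ p ∈ naNodes Q := by
  rcases List.mem_flatMap.1 h with ⟨⟨a, l', b⟩, he, hm⟩
  cases l' with
  | nil => simp at hm
  | cons c l' =>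
    rcases List.mem_filterMap.1 hm with ⟨p', hp', hc⟩
    rcases hmb : memB a (reachSet (epsEdges Q) p') with _ | _
    · simp [hmb] at hc
    · simp [hmb] at hc
      obtain ⟨rfl, rfl, rfl⟩ := hc
      exact ⟨a, he, mem_reachSet_iff.1 (memB_iff.1 hmb), by simp, hp'⟩

theorem mem_elim_accept_intro {Q : NA (List B)} {p q : ℕ}
    (hp : p ∈ naNodes Q) (hr : EpsR Q p q) (hq : q ∈ Q.accept) :
    p ∈ (elimNA Q).accept := by
  refine List.mem_filterMap.2 ⟨p, hp, ?_⟩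
  have : anyMemB (reachSet (epsEdges Q) p) Q.accept = true :=
    anyMemB_iff.2 ⟨q, mem_reachSet_iff.2 hr, hq⟩
  simp [this]

theorem mem_elim_accept_elim {Q : NA (List B)} {p : ℕ}
    (h : p ∈ (elimNA Q).accept) :
    p ∈ naNodes Q ∧ ∃ q, EpsR Q p q ∧ q ∈ Q.accept := by
  rcases List.mem_filterMap.1 h with ⟨p', hp', hc⟩
  rcases hmb : anyMemB (reachSet (epsEdges Q) p') Q.accept with _ | _
  · simp [hmb] at hc
  · simp [hmb] at hc
    subst hc
    rcases anyMemB_iff.1 hmb with ⟨q, hq1, hq2⟩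
    exact ⟨hp', q, mem_reachSet_iff.1 hq1, hq2⟩

theorem eps_to_reach {Q : NA (List B)} {p x : ℕ} (h : EpsR Q p x) :
    ∃ ws : List (List B), Q.Reach p ws x ∧ ws.flatten = [] := by
  induction h with
  | refl => exact ⟨[], NA.Reach.refl _, rfl⟩
  | tail _ he ih =>
    rcases ih with ⟨ws, hr, hf⟩
    refine ⟨ws ++ [[]], hr.append (NA.Reach.step (mem_epsEdges.1 he) (NA.Reach.refl _)), ?_⟩
    simp [hf]

theorem elim_reach_fwd {Q : NA (List B)} :
    ∀ {p ws q}, Q.Reach p ws q → p ∈ naNodes Q →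
    ∃ ws' r, (elimNA Q).Reach p ws' r ∧ EpsR Q r q ∧ ws'.flatten = ws.flatten ∧
      r ∈ naNodes Q := by
  intro p ws q h
  induction h with
  | refl z => exact fun hp => ⟨[], z, NA.Reach.refl _, .refl, rfl, hp⟩
  | @step p a t w r he hrest ih =>
    intro hp
    have ht : t ∈ naNodes Q := tgt_mem_naNodes he
    obtain ⟨ws', r', hreach, heps, hflat, hr'⟩ := ih ht
    cases a with
    | nil =>
      have hpe : EpsR Q p t := Relation.ReflTransGen.single (mem_epsEdges.2 he)
      cases hreach with
      | refl =>
        exact ⟨[], p, NA.Reach.refl _, hpe.trans heps, by simpa using hflat, hp⟩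
      | @step _ l₂ t₂ rest _ he₂ hrest₂ =>
        obtain ⟨x, hxQ, hex, hlne, -⟩ := mem_elim_trans_elim he₂
        have hnew : (p, l₂, t₂) ∈ (elimNA Q).trans :=
          mem_elim_trans_intro hxQ hlne hp (hpe.trans hex)
        exact ⟨l₂ :: rest, r', NA.Reach.step hnew hrest₂, heps, by simpa using hflat, hr'⟩
    | cons b a' =>
      have hnew : (p, b :: a', t) ∈ (elimNA Q).trans :=
        mem_elim_trans_intro he (by simp) hp .refl
      exact ⟨(b :: a') :: ws', r', NA.Reach.step hnew hreach, heps, by simp [hflat], hr'⟩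

theorem elim_reach_bwd {Q : NA (List B)} :
    ∀ {p ws' r}, (elimNA Q).Reach p ws' r →
    ∃ ws, Q.Reach p ws r ∧ ws.flatten = ws'.flatten := by
  intro p ws' r h
  induction h with
  | refl z => exact ⟨[], NA.Reach.refl _, rfl⟩
  | @step p l t w r he hrest ih =>
    obtain ⟨x, hxQ, hex, -, -⟩ := mem_elim_trans_elim he
    obtain ⟨ws₀, hr₀, hf₀⟩ := eps_to_reach hex
    obtain ⟨ws₁, hr₁, hf₁⟩ := ih
    refine ⟨ws₀ ++ l :: ws₁, hr₀.append (NA.Reach.step hxQ hr₁), ?_⟩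
    simp [hf₀, hf₁]

theorem elim_flatten_lang {Q : NA (List B)} :
    List.flatten '' (elimNA Q).lang = List.flatten '' Q.lang := by
  ext v
  constructor
  · rintro ⟨ws', ⟨r, hr, hreach⟩, rfl⟩
    obtain ⟨hrn, q, heps, hq⟩ := mem_elim_accept_elim hr
    obtain ⟨ws, hQr, hf⟩ := elim_reach_bwd hreach
    obtain ⟨ws₂, hr₂, hf₂⟩ := eps_to_reach heps
    exact ⟨ws ++ ws₂, ⟨q, hq, hQr.append hr₂⟩, by simp [hf, hf₂]⟩
  · rintro ⟨ws, ⟨q, hq, hreach⟩, rfl⟩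
    obtain ⟨ws', r, hreach', heps, hflat, hrn⟩ := elim_reach_fwd hreach start_mem_naNodes
    exact ⟨ws', ⟨r, mem_elim_accept_intro hrn heps hq, hreach'⟩, hflat⟩

theorem elim_labels_ne {Q : NA (List B)} {e} (he : e ∈ (elimNA Q).trans) : e.2.1 ≠ [] := by
  obtain ⟨x, -, -, hne, -⟩ := mem_elim_trans_elim (p := e.1) (l := e.2.1) (t := e.2.2) (by simpa using he)
  exact hne

end Elim

/-! ### Expanding a word-labelled automaton into a letter automaton -/

section Expand
variable {B : Type} [Primcodable B]

def mainSt (p : ℕ) : ℕ := Nat.pair 0 p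

def waitSt (s : List B) (q : ℕ) : ℕ := Nat.pair 1 (Encodable.encode (s, q))

def nextSt (s : List B) (q : ℕ) : ℕ := match s with
  | [] => mainSt q
  | _ :: _ => waitSt s q

def tailEdges (q : ℕ) : List B → List (ℕ × B × ℕ)
  | [] => []
  | b :: rest => (waitSt (b :: rest) q, b, nextSt rest q) :: tailEdges q rest

def chainE (src : ℕ) (w : List B) (q : ℕ) : List (ℕ × B × ℕ) :=
  match w with
  | [] => []
  | b :: rest => (src, b, nextSt rest q) :: tailEdges q rest

def expandNA (Q : NA (List B)) : NA B where
  trans := Q.trans.flatMap fun e => chainE (mainSt e.1) e.2.1 e.2.2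
  start := mainSt Q.start
  accept := Q.accept.map mainSt

theorem mainSt_inj {p q : ℕ} (h : mainSt p = mainSt q) : p = q := by
  simpa [mainSt, Nat.pair_eq_pair] using h

theorem mainSt_ne_waitSt {p : ℕ} {s : List B} {q : ℕ} : mainSt p ≠ waitSt s q := by
  simp [mainSt, waitSt, Nat.pair_eq_pair]

theorem waitSt_inj {s s' : List B} {q q' : ℕ} (h : waitSt s q = waitSt s' q') :
    s = s' ∧ q = q' := by
  simp only [waitSt, Nat.pair_eq_pair, true_and] at h
  have h2 : (s, q) = (s', q') := Encodable.encode_injective h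
  exact Prod.ext_iff.1 h2

theorem _root_.RSP.NA.Reach.cons_inv {α : Type} {P : NA α} {x : ℕ} {b : α} {w : List α} {y : ℕ}
    (h : P.Reach x (b :: w) y) : ∃ t, (x, b, t) ∈ P.trans ∧ P.Reach t w y := by
  cases h
  exact ⟨_, ‹_›, ‹_›⟩

theorem mem_tailEdges_elim {q : ℕ} {x t : ℕ} {b : B} :
    ∀ {s : List B}, (x, b, t) ∈ tailEdges q s →
      ∃ rest, x = waitSt (b :: rest) q ∧ t = nextSt rest q := by
  intro s h
  induction s with
  | nil => simp [tailEdges] at h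
  | cons c s ih =>
    rcases List.mem_cons.1 h with h | h
    · rw [Prod.ext_iff] at h
      obtain ⟨hx, h2⟩ := h
      rw [Prod.ext_iff] at h2
      obtain ⟨hb, ht⟩ := h2
      subst hb
      exact ⟨s, hx, ht⟩
    · exact ih h

theorem mem_expand_trans_elim {Q : NA (List B)} {x t : ℕ} {b : B}
    (h : (x, b, t) ∈ (expandNA Q).trans) :
    ∃ e ∈ Q.trans,
      (∃ rest, e.2.1 = b :: rest ∧ x = mainSt e.1 ∧ t = nextSt rest e.2.2) ∨
      (∃ rest, x = waitSt (b :: rest) e.2.2 ∧ t = nextSt rest e.2.2) := by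
  rcases List.mem_flatMap.1 h with ⟨e, he, hm⟩
  rcases hw : e.2.1 with _ | ⟨c, rest⟩
  · rw [hw] at hm; simp [chainE] at hm
  · rw [hw] at hm
    rcases List.mem_cons.1 hm with h1 | h1
    · rw [Prod.ext_iff] at h1
      obtain ⟨hx, h2⟩ := h1
      rw [Prod.ext_iff] at h2
      obtain ⟨hb, ht⟩ := h2
      subst hb
      exact ⟨e, he, Or.inl ⟨rest, hw, hx, ht⟩⟩
    · exact ⟨e, he, Or.inr (mem_tailEdges_elim h1)⟩

theorem reach_nextSt {Q : NA (List B)} {q : ℕ} :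
    ∀ {s : List B}, (∀ ed ∈ tailEdges q s, ed ∈ (expandNA Q).trans) →
      (expandNA Q).Reach (nextSt s q) s (mainSt q) := by
  intro s
  induction s with
  | nil => intro _; exact NA.Reach.refl _
  | cons b rest ih =>
    intro hsub
    refine NA.Reach.step (hsub _ (List.mem_cons_self)) (ih fun ed hed => ?_)
    exact hsub ed (List.mem_cons_of_mem _ hed)

theorem expand_edge_reach {Q : NA (List B)} {p : ℕ} {w : List B} {q : ℕ}
    (he : (p, w, q) ∈ Q.trans) (hw : w ≠ []) :
    (expandNA Q).Reach (mainSt p) w (mainSt q) := by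
  have hsub : ∀ ed ∈ chainE (mainSt p) w q, ed ∈ (expandNA Q).trans := fun ed hed =>
    List.mem_flatMap.2 ⟨(p, w, q), he, hed⟩
  cases w with
  | nil => exact absurd rfl hw
  | cons b rest =>
    refine NA.Reach.step (hsub _ (List.mem_cons_self)) (reach_nextSt fun ed hed => ?_)
    exact hsub ed (List.mem_cons_of_mem _ hed)

theorem expand_reach_fwd {Q : NA (List B)} (hne : ∀ e ∈ Q.trans, e.2.1 ≠ ([] : List B)) :
    ∀ {p ws q}, Q.Reach p ws q →
      (expandNA Q).Reach (mainSt p) ws.flatten (mainSt q) := by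
  intro p ws q h
  induction h with
  | refl z => exact NA.Reach.refl _
  | @step p a t w r he hrest ih =>
    rw [List.flatten_cons]
    exact (expand_edge_reach he (hne _ he)).append ih

theorem expand_reach_wait {Q : NA (List B)} :
    ∀ {x v y}, (expandNA Q).Reach x v y →
    ∀ s q r, x = waitSt s q → y = mainSt r →
      ∃ v', v = s ++ v' ∧ (expandNA Q).Reach (mainSt q) v' (mainSt r) := by
  intro x v y h
  induction h with
  | refl z =>
    intro s q r hx hy
    rw [hx] at hy
    exact absurd hy.symm mainSt_ne_waitSt
  | @step z b t v₂ y he hrest ih =>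
    intro s q r hx hy
    subst hx
    obtain ⟨e, heQ, hcase⟩ := mem_expand_trans_elim he
    rcases hcase with ⟨rest, hw, hxx, ht⟩ | ⟨rest, hxx, ht⟩
    · exact absurd hxx.symm mainSt_ne_waitSt
    · obtain ⟨hs, hq⟩ := waitSt_inj hxx.symm
      subst hs
      cases rest with
      | nil =>
        refine ⟨v₂, by simp, ?_⟩
        subst hy
        have htm : t = mainSt q := by rw [ht, hq]; exact rfl
        rw [htm] at hrest
        exact hrest
      | cons c rest' =>
        obtain ⟨v', hv, hrr⟩ := ih (c :: rest') e.2.2 r (by rw [ht]; rfl) hy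
        refine ⟨v', by simp [hv], hq ▸ hrr⟩

theorem expand_reach_bwd {Q : NA (List B)} :
    ∀ (n : ℕ) (v : List B), v.length ≤ n → ∀ p r,
      (expandNA Q).Reach (mainSt p) v (mainSt r) →
      ∃ ws, Q.Reach p ws r ∧ ws.flatten = v := by
  intro n
  induction n with
  | zero =>
    intro v hv p r h
    have : v = [] := List.length_eq_zero_iff.1 (Nat.le_zero.1 hv)
    subst this
    obtain rfl : p = r := mainSt_inj h.nil_eq
    exact ⟨[], NA.Reach.refl _, rfl⟩
  | succ n ih =>
    intro v hv p r h
    cases v with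
    | nil =>
      obtain rfl : p = r := mainSt_inj h.nil_eq
      exact ⟨[], NA.Reach.refl _, rfl⟩
    | cons b v₂ =>
      obtain ⟨t, he, hrest⟩ := h.cons_inv
      obtain ⟨e, heQ, hcase⟩ := mem_expand_trans_elim he
      rcases hcase with ⟨rest, hw, hxx, ht⟩ | ⟨rest, hxx, ht⟩
      · obtain rfl : e.1 = p := mainSt_inj hxx.symm
        cases rest with
        | nil =>
          rw [ht] at hrest
          obtain ⟨ws₂, hr₂, hf₂⟩ := ih v₂ (by simpa using hv) e.2.2 r hrest
          refine ⟨[b] :: ws₂, NA.Reach.step ?_ hr₂, by simp [hf₂]⟩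
          have : e = (e.1, [b], e.2.2) := by
            rw [← hw]
          rw [← this]; exact heQ
        | cons c rest' =>
          obtain ⟨v₃, hv₃, hrr⟩ := expand_reach_wait hrest (c :: rest') e.2.2 r (by rw [ht]; rfl) rfl
          have hlen : v₃.length ≤ n := by
            subst hv₃
            simp at hv
            omega
          obtain ⟨ws₃, hr₃, hf₃⟩ := ih v₃ hlen e.2.2 r hrr
          refine ⟨(b :: c :: rest') :: ws₃, NA.Reach.step ?_ hr₃, by simp [hf₃, hv₃]⟩
          have : e = (e.1, b :: c :: rest', e.2.2) := by
            rw [← hw]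
          rw [← this]; exact heQ
      · exact absurd hxx mainSt_ne_waitSt

theorem expand_lang {Q : NA (List B)} (hne : ∀ e ∈ Q.trans, e.2.1 ≠ ([] : List B)) :
    (expandNA Q).lang = List.flatten '' Q.lang := by
  ext v
  constructor
  · rintro ⟨y, hy, hreach⟩
    rcases List.mem_map.1 hy with ⟨qa, hqa, rfl⟩
    obtain ⟨ws, hr, hf⟩ := expand_reach_bwd v.length v le_rfl Q.start qa hreach
    exact ⟨ws, ⟨qa, hqa, hr⟩, hf⟩
  · rintro ⟨ws, ⟨qa, hqa, hreach⟩, rfl⟩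
    exact ⟨mainSt qa, List.mem_map.2 ⟨qa, hqa, rfl⟩, expand_reach_fwd hne hreach⟩

end Expand

/-! ### Primitive recursiveness of the constructions -/

section Comp
open Primrec

theorem or_primrec : Primrec₂ (· || · : Bool → Bool → Bool) :=
  (Primrec.cond Primrec.fst (const true) Primrec.snd).of_eq fun p => by cases p.1 <;> rfl

theorem memB_primrec : Primrec₂ memB :=
  (list_foldr (Primrec.snd) (const false)
    (Primrec₂.comp or_primrec
      (Primrec.eq.comp (fst.comp fst) (fst.comp snd)).decide (snd.comp snd)).to₂ :
    Primrec fun p : ℕ × List ℕ => _).to₂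

theorem anyMemB_primrec : Primrec₂ anyMemB :=
  (list_foldr (Primrec.fst) (const false)
    (Primrec₂.comp or_primrec
      (memB_primrec.comp (fst.comp snd) (snd.comp fst)) (snd.comp snd)).to₂ :
    Primrec fun p : List ℕ × List ℕ => _).to₂

theorem eStep_primrec : Primrec₂ eStep :=
  (list_append.comp Primrec.snd
    (listFilterMap Primrec.fst
      ((Primrec.cond (memB_primrec.comp (fst.comp snd) (snd.comp fst))
        (option_some.comp (snd.comp snd)) (const none)).to₂))).to₂

theorem reachIter_eq_iterate (E : List (ℕ × ℕ)) (s : ℕ) (k : ℕ) :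
    reachIter E s k = (eStep E)^[k] [s] := by
  induction k with
  | zero => rfl
  | succ k ih => rw [Function.iterate_succ_apply', ← ih]; rfl

theorem reachSet_primrec : Primrec₂ reachSet := by
  have h : Primrec fun p : List (ℕ × ℕ) × ℕ => (eStep p.1)^[p.1.length + 2] [p.2] :=
    nat_iterate (Primrec.succ.comp (Primrec.succ.comp (list_length.comp Primrec.fst)))
      (list_cons.comp Primrec.snd (const [])) (eStep_primrec.comp (fst.comp fst) Primrec.snd).to₂
  exact (h.of_eq fun p => (reachIter_eq_iterate p.1 p.2 _).symm).to₂

end Comp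

section Comp2
open Primrec

variable {α B : Type} [Primcodable α] [Primcodable B]

theorem na_equiv_primrec : Primrec (NA.equivRepr α) := Primrec.of_equiv

theorem na_trans_primrec : Primrec (fun P : NA α => P.trans) :=
  fst.comp na_equiv_primrec

theorem na_start_primrec : Primrec (fun P : NA α => P.start) :=
  (fst.comp snd).comp na_equiv_primrec

theorem na_accept_primrec : Primrec (fun P : NA α => P.accept) :=
  (snd.comp snd).comp na_equiv_primrec

theorem na_mk_primrec {γ : Type} [Primcodable γ] {t : γ → List (ℕ × α × ℕ)} {s : γ → ℕ}
    {a : γ → List ℕ} (ht : Primrec t) (hs : Primrec s) (ha : Primrec a) :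
    Primrec (fun x : γ => (⟨t x, s x, a x⟩ : NA α)) :=
  (Primrec.of_equiv_symm (e := NA.equivRepr α)).comp (Primrec.pair ht (Primrec.pair hs ha))

theorem mainSt_primrec : Primrec mainSt := Primrec₂.natPair.comp (const 0) Primrec.id

theorem waitSt_primrec : Primrec₂ (waitSt : List B → ℕ → ℕ) :=
  (Primrec₂.natPair.comp (const 1) (Primrec.encode)).to₂

theorem nextSt_primrec : Primrec₂ (nextSt : List B → ℕ → ℕ) := by
  have h : Primrec fun p : List B × ℕ =>
      (List.casesOn p.1 (mainSt p.2) (fun _ _ => waitSt p.1 p.2) : ℕ) :=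
    list_casesOn Primrec.fst (mainSt_primrec.comp Primrec.snd)
      ((waitSt_primrec.comp (fst.comp fst) (snd.comp fst)).to₂)
  have h2 : Primrec fun p : List B × ℕ => nextSt p.1 p.2 :=
    h.of_eq fun p => by rcases p with ⟨_ | _, q⟩ <;> rfl
  exact h2.to₂

theorem tailEdges_eq_rec (q : ℕ) (w : List B) :
    tailEdges q w = w.rec [] (fun b l ih => (waitSt (b :: l) q, b, nextSt l q) :: ih) := by
  induction w with
  | nil => rfl
  | cons b l ih => simp only [tailEdges, ih]

theorem tailEdges_primrec : Primrec₂ (tailEdges : ℕ → List B → List (ℕ × B × ℕ)) := by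
  have h : Primrec fun p : ℕ × List B =>
      (p.2.rec ([] : List (ℕ × B × ℕ))
        (fun b l ih => (waitSt (b :: l) p.1, b, nextSt l p.1) :: ih) : List (ℕ × B × ℕ)) := by
    have hh : Primrec fun x : (ℕ × List B) × B × List B × List (ℕ × B × ℕ) =>
        (waitSt (x.2.1 :: x.2.2.1) x.1.1, x.2.1, nextSt x.2.2.1 x.1.1) :: x.2.2.2 :=
      list_cons.comp
        (Primrec.pair
          (waitSt_primrec.comp
            (list_cons.comp (fst.comp snd) (fst.comp (snd.comp snd))) (Primrec.fst.comp fst))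
          (Primrec.pair (fst.comp snd)
            (nextSt_primrec.comp (fst.comp (snd.comp snd)) (Primrec.fst.comp fst))))
        (snd.comp (snd.comp snd))
    exact list_rec Primrec.snd (const []) hh.to₂
  have h2 : Primrec fun p : ℕ × List B => tailEdges p.1 p.2 :=
    h.of_eq fun p => (tailEdges_eq_rec p.1 p.2).symm
  exact h2.to₂

theorem chainE_primrec : Primrec (fun x : ℕ × List B × ℕ => chainE x.1 x.2.1 x.2.2) := by
  have h : Primrec fun x : ℕ × List B × ℕ =>
      (List.casesOn x.2.1 ([] : List (ℕ × B × ℕ))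
        (fun b l => (x.1, b, nextSt l x.2.2) :: tailEdges x.2.2 l) : List (ℕ × B × ℕ)) := by
    have hh : Primrec fun y : (ℕ × List B × ℕ) × B × List B =>
        (y.1.1, y.2.1, nextSt y.2.2 y.1.2.2) :: tailEdges y.1.2.2 y.2.2 :=
      list_cons.comp
        (Primrec.pair (Primrec.fst.comp fst)
          (Primrec.pair (fst.comp snd)
            (nextSt_primrec.comp (snd.comp snd) ((snd.comp snd).comp fst))))
        (tailEdges_primrec.comp ((snd.comp snd).comp fst) (snd.comp snd))
    exact list_casesOn (fst.comp snd) (const []) hh.to₂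
  exact h.of_eq fun x => by rcases x with ⟨s, _ | _, q⟩ <;> rfl

theorem expandNA_primrec : Primrec (expandNA : NA (List B) → NA B) := by
  refine na_mk_primrec ?_ (mainSt_primrec.comp na_start_primrec)
    (list_map na_accept_primrec (mainSt_primrec.comp₂ Primrec₂.right))
  refine list_flatMap na_trans_primrec ?_
  exact (chainE_primrec.comp
    (Primrec.pair (mainSt_primrec.comp (fst.comp snd))
      (Primrec.pair (fst.comp (snd.comp snd)) (snd.comp (snd.comp snd))))).to₂

theorem naNodes_primrec : Primrec (naNodes : NA (List B) → List ℕ) :=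
  list_cons.comp na_start_primrec
    (list_flatMap na_trans_primrec
      ((list_cons.comp (fst.comp snd)
        (list_cons.comp (snd.comp (snd.comp snd)) (const []))).to₂))

theorem epsEdges_primrec : Primrec (epsEdges : NA (List B) → List (ℕ × ℕ)) := by
  refine listFilterMap na_trans_primrec ?_
  have h : Primrec fun x : NA (List B) × (ℕ × List B × ℕ) =>
      (List.casesOn x.2.2.1 (some (x.2.1, x.2.2.2)) (fun _ _ => none) : Option (ℕ × ℕ)) :=
    list_casesOn (fst.comp (snd.comp snd))
      (option_some.comp (Primrec.pair (fst.comp snd) (snd.comp (snd.comp snd))))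
      (const none).to₂
  have h2 : Primrec fun x : NA (List B) × (ℕ × List B × ℕ) =>
      (match x.2.2.1 with
        | [] => some (x.2.1, x.2.2.2)
        | _ :: _ => none : Option (ℕ × ℕ)) :=
    h.of_eq fun x => by rcases x with ⟨Q, p, _ | _, t⟩ <;> rfl
  exact h2.to₂

theorem elimNA_primrec : Primrec (elimNA : NA (List B) → NA (List B)) := by
  refine na_mk_primrec ?_ na_start_primrec ?_
  · refine list_flatMap na_trans_primrec ?_
    have h : Primrec fun x : NA (List B) × (ℕ × List B × ℕ) =>
        (List.casesOn x.2.2.1 ([] : List (ℕ × List B × ℕ))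
          (fun _ _ => (naNodes x.1).filterMap fun p =>
            cond (memB x.2.1 (reachSet (epsEdges x.1) p)) (some (p, x.2.2.1, x.2.2.2)) none)
          : List (ℕ × List B × ℕ)) := by
      have hin : Primrec fun z : (NA (List B) × ℕ × List B × ℕ) × ℕ =>
          cond (memB z.1.2.1 (reachSet (epsEdges z.1.1) z.2))
            (some (z.2, z.1.2.2.1, z.1.2.2.2)) none :=
        Primrec.cond
          (memB_primrec.comp ((fst.comp snd).comp fst)
            (reachSet_primrec.comp (epsEdges_primrec.comp (fst.comp fst)) snd))
          (option_some.comp (Primrec.pair snd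
            (Primrec.pair ((fst.comp (snd.comp snd)).comp fst)
              ((snd.comp (snd.comp snd)).comp fst))))
          (const none)
      have hfm : Primrec fun x : NA (List B) × (ℕ × List B × ℕ) =>
          (naNodes x.1).filterMap fun p =>
            cond (memB x.2.1 (reachSet (epsEdges x.1) p)) (some (p, x.2.2.1, x.2.2.2)) none :=
        listFilterMap (naNodes_primrec.comp fst) hin.to₂
      exact list_casesOn (fst.comp (snd.comp snd)) (const []) (hfm.comp fst).to₂
    have h2 : Primrec fun x : NA (List B) × (ℕ × List B × ℕ) =>
        (match x.2.2.1 with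
          | [] => ([] : List (ℕ × List B × ℕ))
          | _ :: _ => (naNodes x.1).filterMap fun p =>
              cond (memB x.2.1 (reachSet (epsEdges x.1) p)) (some (p, x.2.2.1, x.2.2.2)) none) :=
      h.of_eq fun x => by rcases x with ⟨Q, p, _ | _, t⟩ <;> rfl
    exact h2.to₂
  · refine listFilterMap naNodes_primrec ?_
    refine Primrec.cond
      (anyMemB_primrec.comp
        (reachSet_primrec.comp (epsEdges_primrec.comp fst) snd)
        (na_accept_primrec.comp fst))
      (option_some.comp snd) (const none) |>.to₂

end Comp2

section Comp3
set_option maxHeartbeats 1000000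
open Primrec

variable {A B : Type} [Primcodable A] [Primcodable B] [Finite A] {m : ℕ}

theorem prodAut_primrec (st : Fin m → A → Fin m) (β : Fin m → A → List B) (c₁ : Fin m) :
    Primrec fun x : NA A × Fin m => prodAut st β x.1 c₁ x.2 := by
  have hval : Primrec (Fin.val : Fin m → ℕ) := dom_finite Fin.val
  have hβu : Primrec fun p : Fin m × A => β p.1 p.2 := dom_finite (fun p : Fin m × A => β p.1 p.2)
  have hstu : Primrec fun p : Fin m × A => st p.1 p.2 := dom_finite (fun p : Fin m × A => st p.1 p.2)
  have htr : Primrec fun x : NA A × Fin m =>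
      x.1.trans.flatMap fun e => (List.finRange m).map fun c =>
        (Nat.pair e.1 c.val, β c e.2.1, Nat.pair e.2.2 (st c e.2.1).val) := by
    have hc : Primrec fun z : ((NA A × Fin m) × ℕ × A × ℕ) × Fin m => z.2 := snd
    have ha : Primrec fun z : ((NA A × Fin m) × ℕ × A × ℕ) × Fin m => z.1.2.2.1 :=
      fst.comp (snd.comp (snd.comp fst))
    have hin : Primrec fun z : ((NA A × Fin m) × ℕ × A × ℕ) × Fin m =>
        (Nat.pair z.1.2.1 z.2.val, β z.2 z.1.2.2.1, Nat.pair z.1.2.2.2 (st z.2 z.1.2.2.1).val) :=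
      Primrec.pair
        (Primrec₂.natPair.comp (fst.comp (snd.comp fst)) (hval.comp snd))
        (Primrec.pair (hβu.comp (Primrec.pair hc ha))
          (Primrec₂.natPair.comp (snd.comp (snd.comp (snd.comp fst)))
            (hval.comp (hstu.comp (Primrec.pair hc ha)))))
    exact list_flatMap (na_trans_primrec.comp fst)
      ((list_map (const (List.finRange m)) hin.to₂).to₂)
  have hmk := na_mk_primrec htr
    (Primrec₂.natPair.comp (na_start_primrec.comp fst) (const c₁.val))
    (list_map (na_accept_primrec.comp fst)
      ((Primrec₂.natPair.comp snd (hval.comp (snd.comp fst))).to₂))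
  exact hmk.of_eq fun x => rfl

def bigF (st : Fin m → A → Fin m) (β : Fin m → A → List B) :
    (Fin m × List B) → A → (Fin m × List B) :=
  fun s a => (st s.1 a, s.2 ++ β s.1 a)

theorem foldl_bigF (st : Fin m → A → Fin m) (β : Fin m → A → List B) :
    ∀ (w : List A) (c : Fin m) (v : List B),
      w.foldl (bigF st β) (c, v) = (runC st c w, v ++ (outL st β c w).flatten) := by
  intro w
  induction w with
  | nil => intro c v; simp [runC, outL]
  | cons a w ih =>
    intro c v
    show w.foldl (bigF st β) (st c a, v ++ β c a) = _
    rw [ih]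
    simp [runC, outL]

theorem foldl_bigF_primrec (st : Fin m → A → Fin m) (β : Fin m → A → List B) (c₁ : Fin m) :
    Primrec fun w : List A => w.foldl (bigF st β) (c₁, []) := by
  have hβu : Primrec fun p : Fin m × A => β p.1 p.2 := dom_finite (fun p : Fin m × A => β p.1 p.2)
  have hstu : Primrec fun p : Fin m × A => st p.1 p.2 := dom_finite (fun p : Fin m × A => st p.1 p.2)
  have hs : Primrec fun z : List A × (Fin m × List B) × A => z.2.1.1 := fst.comp (fst.comp snd)
  have hv : Primrec fun z : List A × (Fin m × List B) × A => z.2.1.2 := snd.comp (fst.comp snd)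
  have ha : Primrec fun z : List A × (Fin m × List B) × A => z.2.2 := snd.comp snd
  have hin : Primrec fun z : List A × (Fin m × List B) × A => bigF st β z.2.1 z.2.2 :=
    Primrec.pair (hstu.comp (Primrec.pair hs ha))
      (list_append.comp hv (hβu.comp (Primrec.pair hs ha)))
  exact list_foldl Primrec.id (const ((c₁, []) : Fin m × List B)) hin.to₂

end Comp3

/-- If `H` is a finitely generated subgroup of finite index in a
finitely generated group `G` and `H` has decidable rational subset problem (with
respect to a finite generating set `B` of `H`), then `G` has decidable rational
subset problem (with respect to any finite generating set `A` of `G`). -/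
theorem isRatSubsetDecidable_of_finiteIndex {G : Type} [Group G] (H : Subgroup G)
    [H.FiniteIndex] {B : Type} [Fintype B] [Primcodable B]
    (πH : List B → H) (hH : IsWordMap πH) (hdec : IsRatSubsetDecidable πH)
    {A : Type} [Fintype A] [Primcodable A] (πG : List A → G) (hG : IsWordMap πG) :
    IsRatSubsetDecidable πG := by
  obtain ⟨fH, hfHcomp, hfHspec⟩ := hdec
  obtain ⟨m, ρ, c₁, st, β, hone, hcomp, hinj⟩ := exists_schreier H πH hH πG
  refine ⟨fun x => fH
      (expandNA (elimNA (prodAut st β x.1 c₁ (x.2.foldl (bigF st β) (c₁, [])).1)),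
        (x.2.foldl (bigF st β) (c₁, [])).2), ?_, ?_⟩
  · have h1 : Primrec fun x : NA A × List A => x.2.foldl (bigF st β) (c₁, []) :=
      (foldl_bigF_primrec st β c₁).comp Primrec.snd
    have hQ : Primrec fun x : NA A × List A =>
        prodAut st β x.1 c₁ (x.2.foldl (bigF st β) (c₁, [])).1 :=
      (prodAut_primrec st β c₁).comp (Primrec.pair Primrec.fst (Primrec.fst.comp h1))
    have hE : Primrec fun x : NA A × List A =>
        expandNA (elimNA (prodAut st β x.1 c₁ (x.2.foldl (bigF st β) (c₁, [])).1)) :=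
      expandNA_primrec.comp (elimNA_primrec.comp hQ)
    exact hfHcomp.comp (hE.pair (Primrec.snd.comp h1)).to_comp
  · intro P w
    have hfold := foldl_bigF st β w c₁ []
    simp only [List.nil_append] at hfold
    dsimp only
    rw [hfold]
    rw [hfHspec]
    rw [expand_lang (fun e he => elim_labels_ne he), elim_flatten_lang]
    exact (main_iff πH hH πG hG ρ c₁ st β hone hcomp hinj P w).symm

end RSP
end

section
/- Let Γ ⊆ Σ* × (Σ ∪ {ε}) be an arbitrary monadic rewriting system over a finite alphabet Σ and let L ⊆ Σ* be a regular language. Then the set LΓ of descendants of L under Γ is a regular language. -/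
/-!
The descendants of a regular language `L = L(M)` are recognised by a saturated automaton on the
states of `M`: reading a letter `a` from `p` may lead to any state that `M` reaches from `p` along
an ancestor of `a`, and a state accepts if some ancestor of the empty word leads from it into an
accepting state of `M`. This works because rules are monadic: a right-hand side never straddles a
cut of the current word, so every derivation `u ⇒* v₁ v₂` splits as `u = u₁ u₂` with `u₁ ⇒* v₁`
and `u₂ ⇒* v₂`, and a derivation of `a₁ ⋯ aₙ` splits letter by letter.
-/

theorem List.append_eq_append_of_length_le_one {α : Type} {r x s v₁ v₂ : List α}
    (hx : x.length ≤ 1) (h : r ++ x ++ s = v₁ ++ v₂) :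
    (∃ t, r = v₁ ++ t ∧ v₂ = t ++ x ++ s) ∨ ∃ t, s = t ++ v₂ ∧ v₁ = r ++ x ++ t := by
  rcases List.append_eq_append_iff.mp h with ⟨t, rfl, rfl⟩ | ⟨t, hrx, rfl⟩
  · exact .inr ⟨t, rfl, rfl⟩
  rcases List.append_eq_append_iff.mp hrx with ⟨t', rfl, rfl⟩ | ⟨t', rfl, rfl⟩
  · obtain rfl | rfl : t' = [] ∨ t = [] := by
      simp only [List.length_append] at hx
      simp only [← List.length_eq_zero_iff]
      omega
    · exact .inl ⟨[], by simp, by simp⟩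
    · exact .inr ⟨[], by simp, by simp⟩
  · exact .inl ⟨t', rfl, by simp⟩

namespace RSP

variable {α : Type} {Γ : Set (List α × List α)}

theorem Step.append_left {u v : List α} (t : List α) (h : Step Γ u v) :
    Step Γ (t ++ u) (t ++ v) := by
  obtain ⟨r, s, w, x, hwx, rfl, rfl⟩ := h
  exact ⟨t ++ r, s, w, x, hwx, by simp, by simp⟩

theorem Step.append_right {u v : List α} (t : List α) (h : Step Γ u v) :
    Step Γ (u ++ t) (v ++ t) := by
  obtain ⟨r, s, w, x, hwx, rfl, rfl⟩ := h
  exact ⟨r, s ++ t, w, x, hwx, by simp, by simp⟩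

theorem reflTransGen_step_append {u₁ u₂ v₁ v₂ : List α}
    (h₁ : Relation.ReflTransGen (Step Γ) u₁ v₁) (h₂ : Relation.ReflTransGen (Step Γ) u₂ v₂) :
    Relation.ReflTransGen (Step Γ) (u₁ ++ u₂) (v₁ ++ v₂) :=
  (h₁.lift (· ++ u₂) fun _ _ h => h.append_right u₂).trans
    (h₂.lift (v₁ ++ ·) fun _ _ h => h.append_left v₁)

theorem Step.exists_append_eq (hΓ : IsMonadic Γ) {u v₁ v₂ : List α}
    (h : Step Γ u (v₁ ++ v₂)) :
    ∃ u₁ u₂, u = u₁ ++ u₂ ∧ Relation.ReflTransGen (Step Γ) u₁ v₁ ∧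
      Relation.ReflTransGen (Step Γ) u₂ v₂ := by
  obtain ⟨r, s, w, x, hwx, rfl, hv⟩ := h
  rcases List.append_eq_append_of_length_le_one (hΓ _ hwx) hv.symm with
    ⟨t, rfl, rfl⟩ | ⟨t, rfl, rfl⟩
  · exact ⟨v₁, t ++ w ++ s, by simp, .refl, .single ⟨t, s, w, x, hwx, rfl, rfl⟩⟩
  · exact ⟨r ++ w ++ t, v₂, by simp, .single ⟨r, t, w, x, hwx, rfl, rfl⟩, .refl⟩

theorem exists_append_eq_of_reflTransGen_step (hΓ : IsMonadic Γ) {u v₁ v₂ : List α}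
    (h : Relation.ReflTransGen (Step Γ) u (v₁ ++ v₂)) :
    ∃ u₁ u₂, u = u₁ ++ u₂ ∧ Relation.ReflTransGen (Step Γ) u₁ v₁ ∧
      Relation.ReflTransGen (Step Γ) u₂ v₂ := by
  generalize hv : v₁ ++ v₂ = v at h
  induction h generalizing v₁ v₂ with
  | refl => exact ⟨v₁, v₂, hv.symm, .refl, .refl⟩
  | tail _ hstep ih =>
    subst hv
    obtain ⟨w₁, w₂, rfl, hw₁, hw₂⟩ := hstep.exists_append_eq hΓ
    obtain ⟨u₁, u₂, rfl, hu₁, hu₂⟩ := ih rfl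
    exact ⟨u₁, u₂, rfl, hu₁.trans hw₁, hu₂.trans hw₂⟩

variable {σ : Type}

def descendantsNFA (Γ : Set (List α × List α)) (M : DFA α σ) : NFA α σ where
  step p a := {q | ∃ u, M.evalFrom p u = q ∧ Relation.ReflTransGen (Step Γ) u [a]}
  start := {M.start}
  accept := {q | ∃ u, M.evalFrom q u ∈ M.accept ∧ Relation.ReflTransGen (Step Γ) u []}

variable {M : DFA α σ}

theorem exists_of_mem_evalFrom_descendantsNFA {S : Set σ} {v : List α} {q : σ}
    (h : q ∈ (descendantsNFA Γ M).evalFrom S v) :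
    ∃ p ∈ S, ∃ u, M.evalFrom p u = q ∧ Relation.ReflTransGen (Step Γ) u v := by
  induction v generalizing S with
  | nil => exact ⟨q, h, [], rfl, .refl⟩
  | cons a v ih =>
    obtain ⟨m, hm, u₂, rfl, hu₂⟩ := ih h
    obtain ⟨p, hp, u₁, rfl, hu₁⟩ := NFA.mem_stepSet.mp hm
    exact ⟨p, hp, u₁ ++ u₂, by rw [DFA.evalFrom_of_append],
      reflTransGen_step_append hu₁ hu₂⟩

theorem exists_mem_evalFrom_descendantsNFA (hΓ : IsMonadic Γ) {S : Set σ} {p : σ} (hp : p ∈ S)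
    {u v : List α} (h : Relation.ReflTransGen (Step Γ) u v) :
    ∃ q ∈ (descendantsNFA Γ M).evalFrom S v, ∃ t, M.evalFrom q t = M.evalFrom p u ∧
      Relation.ReflTransGen (Step Γ) t [] := by
  induction v generalizing S p u with
  | nil => exact ⟨p, hp, u, rfl, h⟩
  | cons a v ih =>
    obtain ⟨u₁, u₂, rfl, hu₁, hu₂⟩ := exists_append_eq_of_reflTransGen_step hΓ (v₁ := [a]) h
    have hm : M.evalFrom p u₁ ∈ (descendantsNFA Γ M).stepSet S a :=
      NFA.mem_stepSet.mpr ⟨p, hp, u₁, rfl, hu₁⟩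
    rw [DFA.evalFrom_of_append]
    exact ih hm hu₂

theorem accepts_descendantsNFA (hΓ : IsMonadic Γ) :
    (descendantsNFA Γ M).accepts = descendants Γ M.accepts := by
  ext v
  constructor
  · intro hv
    obtain ⟨q, ⟨t, ht, hte⟩, hq⟩ := NFA.mem_accepts.mp hv
    obtain ⟨_, rfl, u, rfl, hu⟩ := exists_of_mem_evalFrom_descendantsNFA hq
    refine ⟨u ++ t, ?_, by simpa using reflTransGen_step_append hu hte⟩
    show M.evalFrom M.start (u ++ t) ∈ M.accept
    rwa [DFA.evalFrom_of_append]
  · rintro ⟨u, hu, huv⟩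
    obtain ⟨q, hq, t, ht, hte⟩ :=
      exists_mem_evalFrom_descendantsNFA hΓ (Set.mem_singleton M.start) huv
    exact NFA.mem_accepts.mpr ⟨q, ⟨t, ht ▸ hu, hte⟩, hq⟩

theorem descendants_isRegular_general {α : Type}
    (Γ : Set (List α × List α)) (hΓ : IsMonadic Γ)
    (L : Language α) (hL : L.IsRegular) :
    Language.IsRegular (descendants Γ L) := by
  obtain ⟨σ, _, M, rfl⟩ := hL
  classical
  exact ⟨Set σ, inferInstance, (descendantsNFA Γ M).toDFA,
    by rw [NFA.toDFA_correct, accepts_descendantsNFA hΓ]⟩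

/-- For an arbitrary monadic rewriting system `Γ` over a finite
alphabet and a regular language `L`, the descendant set `LΓ` is regular. -/
theorem descendants_isRegular {α : Type} [Fintype α]
    (Γ : Set (List α × List α)) (hΓ : IsMonadic Γ)
    (L : Language α) (hL : L.IsRegular) :
    Language.IsRegular (descendants Γ L) :=
  descendants_isRegular_general Γ hΓ L hL

end RSP
end

section
/- Let G and H be finitely generated groups. Then membership is uniformly decidable for G-automaton subsets of H if and only if membership is uniformly decidable for H-automaton subsets of G. -/
namespace RSP

section Aux

variable {α β : Type}

/-- Transitivity of reachability in a 2-tape automaton. -/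
theorem NA2.Reach.trans' {T : NA2 α β} {p u v q u' v' r} (h1 : T.Reach p u v q)
    (h2 : T.Reach q u' v' r) : T.Reach p (u ++ u') (v ++ v') r := by
  induction h1 with
  | refl => simpa using h2
  | step hm _ ih =>
    rw [List.append_assoc, List.append_assoc]
    exact NA2.Reach.step hm (ih h2)

/-- The swapped-and-extended automaton used to reduce one direction of the
`G`/`H` automaton problem to the other. -/
def build (inv : α → List α) (T : NA2 β α) (w : List α) : NA2 α β where
  trans := T.trans.map (fun e => (e.1 + 1, (e.2.1.2, e.2.1.1), e.2.2 + 1)) ++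
           T.accept.map (fun q => (q + 1, (w.reverse.flatMap inv, ([] : List β)), 0))
  start := T.start + 1
  accept := [0]

theorem build_reach_fwd {inv : α → List α} {T : NA2 β α} {w : List α} {p u v q}
    (h : T.Reach p u v q) : (build inv T w).Reach (p + 1) v u (q + 1) := by
  induction h with
  | refl p => exact NA2.Reach.refl _
  | @step p u v q u' v' r hm _ ih =>
    refine NA2.Reach.step ?_ ih
    exact List.mem_append_left _ (List.mem_map.2 ⟨_, hm, rfl⟩)

theorem build_reach_bwd {inv : α → List α} {T : NA2 β α} {w : List α} {p x y r}
    (h : (build inv T w).Reach p x y r) : r = 0 →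
    (p = 0 → x = [] ∧ y = []) ∧
    (∀ p0, p = p0 + 1 → ∃ u v q, q ∈ T.accept ∧ T.Reach p0 u v q ∧
      x = v ++ w.reverse.flatMap inv ∧ y = u) := by
  induction h with
  | refl p =>
    intro hr
    refine ⟨fun _ => ⟨rfl, rfl⟩, fun p0 hp => ?_⟩
    omega
  | @step p u' v' q' x' y' r hm h ih =>
    intro hr
    rcases List.mem_append.1 hm with hm | hm
    · rcases List.mem_map.1 hm with ⟨e, he, heq⟩
      simp only [Prod.mk.injEq] at heq
      obtain ⟨hp, ⟨hu, hv⟩, hq⟩ := heq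
      subst hp hu hv hq
      refine ⟨fun h0 => by omega, fun p0 hp0 => ?_⟩
      obtain rfl : p0 = e.1 := by omega
      obtain ⟨u1, v1, q2, hq2, hr2, hx, hy⟩ := (ih hr).2 e.2.2 rfl
      refine ⟨e.2.1.1 ++ u1, e.2.1.2 ++ v1, q2, hq2, NA2.Reach.step he hr2, ?_, ?_⟩
      · simp [hx]
      · simp [hy]
    · rcases List.mem_map.1 hm with ⟨q0, hq0, heq⟩
      simp only [Prod.mk.injEq] at heq
      obtain ⟨hp, ⟨hu, hv⟩, hq⟩ := heq
      subst hp hu hv hq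
      refine ⟨fun h0 => by omega, fun p0 hp0 => ?_⟩
      obtain rfl : p0 = q0 := by omega
      obtain ⟨hx, hy⟩ := (ih hr).1 rfl
      exact ⟨[], [], p0, hq0, NA2.Reach.refl _, by simp [hx], by simp [hy]⟩

theorem build_rel {inv : α → List α} {T : NA2 β α} {w : List α} {x : List α} {y : List β} :
    (x, y) ∈ (build inv T w).rel ↔
      ∃ u v, (u, v) ∈ T.rel ∧ x = v ++ w.reverse.flatMap inv ∧ y = u := by
  constructor
  · rintro ⟨q, hq, hreach⟩
    have hq0 : q = 0 := by simpa [build] using hq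
    subst hq0
    obtain ⟨u, v, q2, hq2, hr2, hx, hy⟩ :=
      (build_reach_bwd hreach rfl).2 T.start rfl
    exact ⟨u, v, ⟨q2, hq2, hr2⟩, hx, hy⟩
  · rintro ⟨u, v, ⟨q, hq, hr⟩, hx, hy⟩
    rw [hx, hy]
    refine ⟨0, by simp [build], ?_⟩
    have h1 : (build inv T w).Reach (T.start + 1) v u (q + 1) := build_reach_fwd hr
    have h2 : (build inv T w).Reach (q + 1) (w.reverse.flatMap inv) ([] : List β) 0 := by
      have hm : (q + 1, (w.reverse.flatMap inv, ([] : List β)), 0) ∈ (build inv T w).trans :=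
        List.mem_append_right _ (List.mem_map.2 ⟨q, hq, rfl⟩)
      simpa using NA2.Reach.step hm (NA2.Reach.refl (T := build inv T w) 0)
    exact (by simpa using NA2.Reach.trans' h1 h2 :
      (build inv T w).Reach (T.start + 1) (v ++ w.reverse.flatMap inv) u 0)

end Aux

theorem invWord_spec {A G : Type} [Group G] {πG : List A → G} (hG : IsWordMap πG)
    {inv : A → List A} (hinv : ∀ a, πG (inv a) = (πG [a])⁻¹) (w : List A) :
    πG (w.reverse.flatMap inv) = (πG w)⁻¹ := by
  induction w with
  | nil => simp [hG.map_nil]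
  | cons a w ih =>
    have h1 : (a :: w).reverse.flatMap inv = w.reverse.flatMap inv ++ inv a := by
      simp
    have h2 : πG (a :: w) = πG [a] * πG w := by
      simpa using hG.map_append [a] w
    rw [h1, hG.map_append, ih, hinv, h2, mul_inv_rev]

theorem build_primrec {A B : Type} [Finite A] [Primcodable A] [Primcodable B] (inv : A → List A) :
    Primrec (fun x : NA2 B A × List A => build inv x.1 x.2) := by
  have hT : Primrec (fun x : NA2 B A × List A => (NA2.equivRepr B A) x.1) :=
    Primrec.of_equiv.comp Primrec.fst
  have htrans : Primrec (fun x : NA2 B A × List A => x.1.trans) :=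
    (Primrec.fst.comp hT).of_eq fun x => rfl
  have haccept : Primrec (fun x : NA2 B A × List A => x.1.accept) :=
    ((Primrec.snd.comp (Primrec.snd.comp hT))).of_eq fun x => rfl
  have hstart : Primrec (fun x : NA2 B A × List A => x.1.start) :=
    ((Primrec.fst.comp (Primrec.snd.comp hT))).of_eq fun x => rfl
  have hinvW : Primrec (fun x : NA2 B A × List A => x.2.reverse.flatMap inv) :=
    Primrec.list_flatMap (Primrec.list_reverse.comp Primrec.snd)
      ((Primrec.dom_finite inv).comp Primrec.snd)
  have hmap1 : Primrec (fun x : NA2 B A × List A =>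
      x.1.trans.map (fun e => (e.1 + 1, (e.2.1.2, e.2.1.1), e.2.2 + 1))) := by
    refine Primrec.list_map htrans ?_
    refine Primrec.pair (Primrec.succ.comp (Primrec.fst.comp Primrec.snd)) ?_
    refine Primrec.pair (Primrec.pair ?_ ?_) ?_
    · exact Primrec.snd.comp (Primrec.fst.comp (Primrec.snd.comp Primrec.snd))
    · exact Primrec.fst.comp (Primrec.fst.comp (Primrec.snd.comp Primrec.snd))
    · exact Primrec.succ.comp (Primrec.snd.comp (Primrec.snd.comp Primrec.snd))
  have hmap2 : Primrec (fun x : NA2 B A × List A =>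
      x.1.accept.map (fun q => (q + 1, (x.2.reverse.flatMap inv, ([] : List B)), 0))) := by
    refine Primrec.list_map haccept ?_
    refine Primrec.pair (Primrec.succ.comp Primrec.snd) ?_
    refine Primrec.pair (Primrec.pair (hinvW.comp Primrec.fst) (Primrec.const [])) ?_
    exact Primrec.const 0
  have hrepr : Primrec (fun x : NA2 B A × List A =>
      ((NA2.equivRepr A B).symm
        (x.1.trans.map (fun e => (e.1 + 1, (e.2.1.2, e.2.1.1), e.2.2 + 1)) ++
           x.1.accept.map (fun q => (q + 1, (x.2.reverse.flatMap inv, ([] : List B)), 0)),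
          x.1.start + 1, [0]))) := by
    refine Primrec.of_equiv_symm.comp ?_
    refine Primrec.pair (Primrec.list_append.comp hmap1 hmap2) ?_
    exact Primrec.pair (Primrec.succ.comp hstart) (Primrec.const [0])
  exact hrepr.of_eq fun x => rfl

/-- The key one-directional reduction. -/
theorem key_dir {G H A B : Type} [Group G] [Group H]
    [Fintype A] [Primcodable A] [Fintype B] [Primcodable B]
    (πG : List A → G) (hG : IsWordMap πG) (πH : List B → H) (hH : IsWordMap πH)
    (h : ∃ f : NA2 A B × List B → Bool, Computable f ∧
      ∀ (T : NA2 A B) (w : List B),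
        (f (T, w) = true ↔ ∃ p ∈ T.rel, πG p.1 = 1 ∧ πH p.2 = πH w)) :
    (∃ f : NA2 B A × List A → Bool, Computable f ∧
      ∀ (T : NA2 B A) (w : List A),
        (f (T, w) = true ↔ ∃ p ∈ T.rel, πH p.1 = 1 ∧ πG p.2 = πG w)) := by
  obtain ⟨f, hf, hspec⟩ := h
  choose inv hinv using fun a : A => hG.surjective (πG [a])⁻¹
  refine ⟨fun x => f (build inv x.1 x.2, []), ?_, ?_⟩
  · exact hf.comp (((build_primrec inv).to_comp).pair (Computable.const []))
  · intro T w
    rw [hspec]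
    constructor
    · rintro ⟨⟨x, y⟩, hmem, hx1, hy1⟩
      obtain ⟨u, v, huv, hx, hy⟩ := build_rel.1 hmem
      refine ⟨(u, v), huv, ?_, ?_⟩
      · rw [← hy]; simpa [hH.map_nil] using hy1
      · have h1 : πG v * (πG w)⁻¹ = 1 := by
          rw [hx, hG.map_append, invWord_spec hG hinv] at hx1
          exact hx1
        exact mul_inv_eq_one.1 h1
    · rintro ⟨⟨u, v⟩, huv, hu1, hv1⟩
      refine ⟨(v ++ w.reverse.flatMap inv, u), build_rel.2 ⟨u, v, huv, rfl, rfl⟩, ?_, ?_⟩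
      · rw [hG.map_append, invWord_spec hG hinv, hv1, mul_inv_cancel]
      · simpa [hH.map_nil] using hu1

/-- For finitely generated groups `G` and `H` (with canonical
surjections `πG : A* → G`, `πH : B* → H`), membership is uniformly decidable for
`G`-automaton subsets of `H` iff membership is uniformly decidable for
`H`-automaton subsets of `G`. -/
theorem gAutomaton_decidable_symm {G H A B : Type} [Group G] [Group H]
    [Fintype A] [Primcodable A] [Fintype B] [Primcodable B]
    (πG : List A → G) (hG : IsWordMap πG) (πH : List B → H) (hH : IsWordMap πH) :
    (∃ f : NA2 A B × List B → Bool, Computable f ∧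
      ∀ (T : NA2 A B) (w : List B),
        (f (T, w) = true ↔ ∃ p ∈ T.rel, πG p.1 = 1 ∧ πH p.2 = πH w)) ↔
    (∃ f : NA2 B A × List A → Bool, Computable f ∧
      ∀ (T : NA2 B A) (w : List A),
        (f (T, w) = true ↔ ∃ p ∈ T.rel, πH p.1 = 1 ∧ πG p.2 = πG w)) :=
  ⟨key_dir πG hG πH hH, key_dir πH hH πG hG⟩

end RSP
end
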